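/- arXiv:2209.12137 — 6 statements merged into one kernel-verified Lean document; each statement's English description precedes it below -/
import Mathlib

section
/- Let π be a permutation of {1,…,n} avoiding all three patterns 3124, 42153, 24153, and let m = π^{-1}(1) be the position of the entry 1. Then there do not exist values 2 ≤ v_1 < v_2 < v_3 < v_4 ≤ n such that π^{-1}(v_1) < m, π^{-1}(v_2) > m, π^{-1}(v_3) < m, and π^{-1}(v_4) > m. Moreover, if additionally π^{-1}(2) < π^{-1}(1), then there also do not exist values 2 ≤ v_1 < v_2 < v_3 < v_4 ≤ n such that π^{-1}(v_1) > m, π^{-1}(v_2) < m, π^{-1}(v_3) > m, and π^{-1}(v_4) < m. -/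
/-- A word `w` contains the pattern `p`: there is an increasing choice of positions
whose entries are order-isomorphic to `p`. -/
def PatContains {n k : ℕ} (w : Fin n → ℕ) (p : Fin k → ℕ) : Prop :=
  ∃ f : Fin k → Fin n, StrictMono f ∧
    (∀ a b : Fin k, w (f a) < w (f b) ↔ p a < p b) ∧
    (∀ a b : Fin k, w (f a) = w (f b) ↔ p a = p b)

/-- A word `w` avoids the pattern `p`. -/
def PatAvoids {n k : ℕ} (w : Fin n → ℕ) (p : Fin k → ℕ) : Prop := ¬ PatContains w p

/-- The number of ascents of a word: positions `i` with `w i < w (i+1)`. -/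
noncomputable def ascNum {n : ℕ} (w : Fin n → ℕ) : ℕ :=
  Nat.card {q : Fin n × Fin n // (q.2 : ℕ) = (q.1 : ℕ) + 1 ∧ w q.1 < w q.2}

/-- The number of descents of a word: positions `i` with `w i > w (i+1)`. -/
noncomputable def desNum {n : ℕ} (w : Fin n → ℕ) : ℕ :=
  Nat.card {q : Fin n × Fin n // (q.2 : ℕ) = (q.1 : ℕ) + 1 ∧ w q.2 < w q.1}

/-- `ides π` is the number of descents of the inverse permutation of `π`. -/
noncomputable def ides {n : ℕ} (π : Equiv.Perm (Fin n)) : ℕ :=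
  desNum (fun i => ((π.symm i : Fin n) : ℕ))

/-- A permutation (viewed as the word of its values) avoids all of
the patterns 3124, 42153, 24153. -/
def AvoidsI {n : ℕ} (π : Equiv.Perm (Fin n)) : Prop :=
  PatAvoids (fun i => ((π i : Fin n) : ℕ)) ![3,1,2,4] ∧
  PatAvoids (fun i => ((π i : Fin n) : ℕ)) ![4,2,1,5,3] ∧
  PatAvoids (fun i => ((π i : Fin n) : ℕ)) ![2,4,1,5,3]

/-- The `i`-th letter of the word `w_π` is `L`, i.e. the entry `i+2` (1-based)
lies strictly to the left of the entry `1`.  (0-based: the value `i+1` lies to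
the left of the value `0`.) -/
def permLetterL {n : ℕ} (π : Equiv.Perm (Fin n)) (i : Fin (n - 1)) : Prop :=
  π.symm ⟨(i : ℕ) + 1, by have := i.isLt; omega⟩ < π.symm ⟨0, by have := i.isLt; omega⟩

/-- The word `w_π` has an alternating subword of length `k`. -/
def HasAltSub {n : ℕ} (π : Equiv.Perm (Fin n)) (k : ℕ) : Prop :=
  ∃ f : Fin k → Fin (n - 1), StrictMono f ∧
    ∀ a b : Fin k, (b : ℕ) = (a : ℕ) + 1 →
      ¬ (permLetterL π (f a) ↔ permLetterL π (f b))

/-- `alt(π) = k`: the longest alternating subword of `w_π` has length exactly `k`. -/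
def altEq {n : ℕ} (π : Equiv.Perm (Fin n)) (k : ℕ) : Prop :=
  HasAltSub π k ∧ ¬ HasAltSub π (k + 1)

/-- The first letter of `w_π` is `L`, i.e. `π⁻¹(2) < π⁻¹(1)`. -/
def FirstL {n : ℕ} (π : Equiv.Perm (Fin n)) : Prop :=
  ∃ a b : Fin n, (a : ℕ) = 0 ∧ (b : ℕ) = 1 ∧ π.symm b < π.symm a

/-- The first letter of `w_π` is `R`, i.e. `π⁻¹(2) > π⁻¹(1)`. -/
def FirstR {n : ℕ} (π : Equiv.Perm (Fin n)) : Prop :=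
  ∃ a b : Fin n, (a : ℕ) = 0 ∧ (b : ℕ) = 1 ∧ π.symm a < π.symm b


private lemma strictMono4 {n : ℕ} (a b c d : Fin n) (h1 : a < b) (h2 : b < c) (h3 : c < d) :
    StrictMono ![a,b,c,d] := by
  intro i j hij
  fin_cases i <;> fin_cases j <;> simp_all <;>
    first
      | exact h1.trans h2
      | exact h2.trans h3
      | exact (h1.trans h2).trans h3

private lemma strictMono5 {n : ℕ} (a b c d e : Fin n) (h1 : a < b) (h2 : b < c)
    (h3 : c < d) (h4 : d < e) : StrictMono ![a,b,c,d,e] := by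
  intro i j hij
  fin_cases i <;> fin_cases j <;> simp_all <;>
    first
      | exact h1.trans h2
      | exact h2.trans h3
      | exact h3.trans h4
      | exact (h1.trans h2).trans h3
      | exact (h2.trans h3).trans h4
      | exact ((h1.trans h2).trans h3).trans h4

/-- for a permutation `π` of `{1,…,n}` avoiding 3124, 42153, 24153
(0-based here: the entry `1` is the value `0`, the value `v` represents the entry
`v+1`, and `m = π⁻¹(1)` is `π.symm 0`), there is no `L R L R` pattern among the
positions of the values `2,…,n` relative to the position of `1`; moreover, if
`π⁻¹(2) < π⁻¹(1)`, there is also no `R L R L` pattern. -/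
theorem stmt_6 (n : ℕ) (hn : 1 ≤ n) (π : Equiv.Perm (Fin n)) (hI : AvoidsI π) :
    (¬ ∃ v₁ v₂ v₃ v₄ : Fin n, 0 < (v₁ : ℕ) ∧ v₁ < v₂ ∧ v₂ < v₃ ∧ v₃ < v₄ ∧
        π.symm v₁ < π.symm ⟨0, by omega⟩ ∧ π.symm ⟨0, by omega⟩ < π.symm v₂ ∧
        π.symm v₃ < π.symm ⟨0, by omega⟩ ∧ π.symm ⟨0, by omega⟩ < π.symm v₄) ∧
    (∀ h2 : 2 ≤ n, π.symm ⟨1, h2⟩ < π.symm ⟨0, by omega⟩ →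
      ¬ ∃ v₁ v₂ v₃ v₄ : Fin n, 0 < (v₁ : ℕ) ∧ v₁ < v₂ ∧ v₂ < v₃ ∧ v₃ < v₄ ∧
        π.symm ⟨0, by omega⟩ < π.symm v₁ ∧ π.symm v₂ < π.symm ⟨0, by omega⟩ ∧
        π.symm ⟨0, by omega⟩ < π.symm v₃ ∧ π.symm v₄ < π.symm ⟨0, by omega⟩) := by

  have key : ∀ v₁ v₂ v₃ v₄ : Fin n, 0 < (v₁ : ℕ) → v₁ < v₂ → v₂ < v₃ → v₃ < v₄ →
      π.symm v₁ < π.symm ⟨0, by omega⟩ → π.symm ⟨0, by omega⟩ < π.symm v₂ →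
      π.symm v₃ < π.symm ⟨0, by omega⟩ → π.symm ⟨0, by omega⟩ < π.symm v₄ → False := by
    intro v₁ v₂ v₃ v₄ h0 h12 h23 h34 H1 H2 H3 H4
    set z : Fin n := ⟨0, by omega⟩ with hz
    set m0 : Fin n := π.symm z with hm
    have e0 : ((π m0 : Fin n) : ℕ) = 0 := by simp [hm, hz]
    have e1 : ((π (π.symm v₁) : Fin n) : ℕ) = (v₁ : ℕ) := by simp
    have e2 : ((π (π.symm v₂) : Fin n) : ℕ) = (v₂ : ℕ) := by simp
    have e3 : ((π (π.symm v₃) : Fin n) : ℕ) = (v₃ : ℕ) := by simp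
    have e4 : ((π (π.symm v₄) : Fin n) : ℕ) = (v₄ : ℕ) := by simp
    have n12 : (v₁ : ℕ) < (v₂ : ℕ) := h12
    have n23 : (v₂ : ℕ) < (v₃ : ℕ) := h23
    have n34 : (v₃ : ℕ) < (v₄ : ℕ) := h34
    have p1 : ((π.symm v₁ : Fin n) : ℕ) < ((m0 : Fin n) : ℕ) := H1
    have p2 : ((m0 : Fin n) : ℕ) < ((π.symm v₂ : Fin n) : ℕ) := H2
    have p3 : ((π.symm v₃ : Fin n) : ℕ) < ((m0 : Fin n) : ℕ) := H3
    have p4 : ((m0 : Fin n) : ℕ) < ((π.symm v₄ : Fin n) : ℕ) := H4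
    rcases lt_trichotomy (π.symm v₂) (π.symm v₄) with h24 | h24 | h24
    · -- pattern 3124 at positions a₃, m, a₂, a₄
      have q24 : ((π.symm v₂ : Fin n) : ℕ) < ((π.symm v₄ : Fin n) : ℕ) := h24
      refine hI.1 ⟨![π.symm v₃, m0, π.symm v₂, π.symm v₄], ?_, ?_, ?_⟩
      · exact strictMono4 _ _ _ _ H3 H2 h24
      · intro a b
        fin_cases a <;> fin_cases b <;>
          simp [e0, e1, e2, e3, e4] <;> omega
      · intro a b
        fin_cases a <;> fin_cases b <;>
          simp [e0, e1, e2, e3, e4] <;> omega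
    · exact absurd (π.symm.injective h24) (by intro h; rw [h] at n23; omega)
    · have q42 : ((π.symm v₄ : Fin n) : ℕ) < ((π.symm v₂ : Fin n) : ℕ) := h24
      rcases lt_trichotomy (π.symm v₁) (π.symm v₃) with h13 | h13 | h13
      · -- pattern 24153 at positions a₁, a₃, m, a₄, a₂
        have q13 : ((π.symm v₁ : Fin n) : ℕ) < ((π.symm v₃ : Fin n) : ℕ) := h13
        refine hI.2.2 ⟨![π.symm v₁, π.symm v₃, m0, π.symm v₄, π.symm v₂], ?_, ?_, ?_⟩
        · exact strictMono5 _ _ _ _ _ h13 H3 H4 h24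
        · intro a b
          fin_cases a <;> fin_cases b <;>
            simp [e0, e1, e2, e3, e4] <;> omega
        · intro a b
          fin_cases a <;> fin_cases b <;>
            simp [e0, e1, e2, e3, e4] <;> omega
      · exact absurd (π.symm.injective h13) (by intro h; rw [h] at n12; omega)
      · -- pattern 42153 at positions a₃, a₁, m, a₄, a₂
        have q31 : ((π.symm v₃ : Fin n) : ℕ) < ((π.symm v₁ : Fin n) : ℕ) := h13
        refine hI.2.1 ⟨![π.symm v₃, π.symm v₁, m0, π.symm v₄, π.symm v₂], ?_, ?_, ?_⟩
        · exact strictMono5 _ _ _ _ _ h13 H1 H4 h24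
        · intro a b
          fin_cases a <;> fin_cases b <;>
            simp [e0, e1, e2, e3, e4] <;> omega
        · intro a b
          fin_cases a <;> fin_cases b <;>
            simp [e0, e1, e2, e3, e4] <;> omega
  constructor
  · rintro ⟨v₁, v₂, v₃, v₄, h0, h12, h23, h34, H1, H2, H3, H4⟩
    exact key v₁ v₂ v₃ v₄ h0 h12 h23 h34 H1 H2 H3 H4
  · intro h2 hL
    rintro ⟨v₁, v₂, v₃, v₄, h0, h12, h23, h34, H1, H2, H3, H4⟩
    have hv1 : (1 : ℕ) < (v₁ : ℕ) := by
      rcases Nat.lt_or_ge 1 (v₁ : ℕ) with h | h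
      · exact h
      · have : v₁ = ⟨1, h2⟩ := Fin.ext (show (v₁ : ℕ) = 1 by omega)
        rw [this] at H1
        exact absurd H1 (lt_asymm hL)
    exact key ⟨1, h2⟩ v₁ v₂ v₃ (by simp) hv1 h12 h23 hL H1 H2 H3
end

section
/- For every n ≥ 1 and every k ≥ 0, the number of permutations π of {1,…,n+1} avoiding 3124, 42153, 24153 with first entry π_1 = 1 and ides(π) = k equals the number of permutations σ of {1,…,n} avoiding 3124, 42153, 24153 with ides(σ) = k. -/
/-!
Deleting the leading entry `1` of `π` and lowering the other entries by one is a bijection onto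
`𝔖_n`. The inverse word of `π` is then `1` followed by the raised inverse word of the image, so
the inverse descents are unchanged. In each of `3124`, `42153`, `24153` the first entry is not
the smallest, whereas an occurrence using the leading `1` would have to map the first pattern
entry to the strict minimum; so occurrences avoid position `1` and correspond to occurrences in
the image.
-/

open Equiv

section ShiftedWord

variable {n : ℕ} {w : Fin (n + 1) → ℕ} {v : Fin n → ℕ}

lemma desNum_eq_of_zero_succ (h0 : w 0 = 0) (hs : ∀ i, w i.succ = v i + 1) :
    desNum w = desNum v := by
  have hdes : {q : Fin (n + 1) × Fin (n + 1) | (q.2 : ℕ) = q.1 + 1 ∧ w q.2 < w q.1} =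
      Prod.map Fin.succ Fin.succ ''
        {q : Fin n × Fin n | (q.2 : ℕ) = q.1 + 1 ∧ v q.2 < v q.1} := by
    ext ⟨a, b⟩
    cases a using Fin.cases <;> cases b using Fin.cases <;> simp [h0, hs]
  change Nat.card {q | _} = Nat.card {q | _}
  rw [hdes, Nat.card_image_of_injective ((Fin.succ_injective n).prodMap (Fin.succ_injective n))]

lemma patContains_iff_of_zero_succ (h0 : w 0 = 0) (hs : ∀ i, w i.succ = v i + 1)
    {m : ℕ} [NeZero m] {p : Fin m → ℕ} {j : Fin m} (hj : p j < p 0) :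
    PatContains w p ↔ PatContains v p := by
  constructor
  · rintro ⟨f, hf, hlt, heq⟩
    have hf0 : ∀ a, f a ≠ 0 := by
      intro a ha
      have hfj : w (f j) < w (f 0) := (hlt j 0).2 hj
      have hf0 : f 0 = 0 := nonpos_iff_eq_zero.1 (ha ▸ hf.monotone (Fin.zero_le a))
      rw [hf0, h0] at hfj
      exact Nat.not_lt_zero _ hfj
    choose g hg using fun a => Fin.exists_succ_eq.2 (hf0 a)
    obtain rfl : f = Fin.succ ∘ g := funext fun a => (hg a).symm
    refine ⟨g, fun a b hab => Fin.succ_lt_succ_iff.1 (hf hab), fun a b => ?_, fun a b => ?_⟩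
    · simpa [hs] using hlt a b
    · simpa [hs] using heq a b
  · rintro ⟨g, hg, hlt, heq⟩
    exact ⟨Fin.succ ∘ g, Fin.strictMono_succ.comp hg,
      by simpa [hs] using hlt, by simpa [hs] using heq⟩

end ShiftedWord

section FixZero

open Perm

def fixZeroEquiv (n : ℕ) : Perm (Fin n) ≃ {π : Perm (Fin (n + 1)) // π 0 = 0} where
  toFun σ := ⟨decomposeFin.symm (0, σ), decomposeFin_symm_apply_zero _ _⟩
  invFun π := (decomposeFin π.1).2
  left_inv σ := by simp
  right_inv := by
    rintro ⟨π, hπ⟩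
    have hdec : decomposeFin π = (0, (decomposeFin π).2) := by
      refine Prod.ext ?_ rfl
      rw [← hπ, ← decomposeFin_symm_apply_zero (decomposeFin π).1 (decomposeFin π).2,
        Prod.mk.eta, symm_apply_apply]
    exact Subtype.ext (by dsimp only; rw [← hdec, symm_apply_apply])

variable {n : ℕ} (σ : Perm (Fin n))

lemma fixZeroEquiv_apply_succ (i : Fin n) : (fixZeroEquiv n σ).1 i.succ = (σ i).succ := by
  simp [fixZeroEquiv, decomposeFin_symm_apply_succ]

lemma fixZeroEquiv_symm_apply_succ (i : Fin n) :
    (fixZeroEquiv n σ).1.symm i.succ = (σ.symm i).succ := by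
  rw [symm_apply_eq, fixZeroEquiv_apply_succ, apply_symm_apply]

lemma ides_fixZeroEquiv : ides (fixZeroEquiv n σ).1 = ides σ :=
  desNum_eq_of_zero_succ (by simp [symm_apply_eq, (fixZeroEquiv n σ).2])
    (fun i => by simp [fixZeroEquiv_symm_apply_succ])

lemma avoidsI_fixZeroEquiv : AvoidsI (fixZeroEquiv n σ).1 ↔ AvoidsI σ := by
  have h0 : ((fixZeroEquiv n σ).1 0 : ℕ) = 0 := by simp [(fixZeroEquiv n σ).2]
  have hs (i : Fin n) : ((fixZeroEquiv n σ).1 i.succ : ℕ) = σ i + 1 := by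
    simp [fixZeroEquiv_apply_succ]
  have hpat {m : ℕ} [NeZero m] {p : Fin m → ℕ} (j : Fin m) (hj : p j < p 0) :=
    patContains_iff_of_zero_succ (w := fun i => (fixZeroEquiv n σ).1 i)
      (v := fun i => σ i) h0 hs hj
  unfold AvoidsI PatAvoids
  rw [hpat 1 (by decide), hpat 1 (by decide), hpat 2 (by decide)]

end FixZero

theorem stmt_7_general (n k : ℕ) :
    Nat.card {π : Equiv.Perm (Fin (n + 1)) //
      AvoidsI π ∧ π 0 = 0 ∧ ides π = k} =
    Nat.card {σ : Equiv.Perm (Fin n) // AvoidsI σ ∧ ides σ = k} := by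
  calc Nat.card {π : Perm (Fin (n + 1)) // AvoidsI π ∧ π 0 = 0 ∧ ides π = k}
      = Nat.card {π : {π : Perm (Fin (n + 1)) // π 0 = 0} // AvoidsI π.1 ∧ ides π.1 = k} :=
        Nat.card_congr <| (subtypeEquivRight fun _ => and_left_comm).trans
          (subtypeSubtypeEquivSubtypeInter _ _).symm
    _ = Nat.card {σ : Perm (Fin n) // AvoidsI σ ∧ ides σ = k} :=
        Nat.card_congr ((fixZeroEquiv n).subtypeEquiv fun σ => by
          rw [avoidsI_fixZeroEquiv, ides_fixZeroEquiv]).symm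

/-- permutations of `{1,…,n+1}` in the avoidance class of
{3124, 42153, 24153} starting with the entry `1` (0-based: `π 0 = 0`) with
`ides = k` are equinumerous with class permutations of `{1,…,n}` with `ides = k`. -/
theorem stmt_7 (n k : ℕ) (hn : 1 ≤ n) :
    Nat.card {π : Equiv.Perm (Fin (n + 1)) //
      AvoidsI π ∧ π 0 = 0 ∧ ides π = k} =
    Nat.card {σ : Equiv.Perm (Fin n) // AvoidsI σ ∧ ides σ = k} :=
  stmt_7_general n k
end

section
/- For every n ≥ 1 and every k ≥ 1, the number of permutations π of {1,…,n+1} avoiding 3124, 42153, 24153 with last entry π_{n+1} = 1 and ides(π) = k equals the number of permutations σ of {1,…,n} avoiding 3124, 42153, 24153 with ides(σ) = k − 1. -/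
namespace Stmt8

variable {n : ℕ}

def extFun (σ : Equiv.Perm (Fin n)) (i : Fin (n+1)) : Fin (n+1) :=
  if h : (i : ℕ) < n then ⟨(σ ⟨i, h⟩ : ℕ) + 1, by have := (σ ⟨i, h⟩).isLt; omega⟩
  else ⟨0, by omega⟩

def extInv (σ : Equiv.Perm (Fin n)) (j : Fin (n+1)) : Fin (n+1) :=
  if h : 0 < (j : ℕ) then
    ⟨(σ.symm ⟨(j:ℕ) - 1, by have := j.isLt; omega⟩ : ℕ),
      by have := (σ.symm ⟨(j:ℕ) - 1, by have := j.isLt; omega⟩).isLt; omega⟩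
  else ⟨n, by omega⟩

lemma extFun_val_lt (σ : Equiv.Perm (Fin n)) (i : Fin (n+1)) (h : (i:ℕ) < n) :
    (extFun σ i : ℕ) = (σ ⟨i, h⟩ : ℕ) + 1 := by
  unfold extFun; rw [dif_pos h]

lemma extFun_val_last (σ : Equiv.Perm (Fin n)) (i : Fin (n+1)) (h : ¬ (i:ℕ) < n) :
    (extFun σ i : ℕ) = 0 := by
  unfold extFun; rw [dif_neg h]

lemma extInv_val_pos (σ : Equiv.Perm (Fin n)) (j : Fin (n+1)) (h : 0 < (j:ℕ)) :
    (extInv σ j : ℕ) = (σ.symm ⟨(j:ℕ) - 1, by have := j.isLt; omega⟩ : ℕ) := by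
  unfold extInv; rw [dif_pos h]

lemma extInv_val_zero (σ : Equiv.Perm (Fin n)) (j : Fin (n+1)) (h : ¬ 0 < (j:ℕ)) :
    (extInv σ j : ℕ) = n := by
  unfold extInv; rw [dif_neg h]

def extPerm (σ : Equiv.Perm (Fin n)) : Equiv.Perm (Fin (n+1)) where
  toFun := extFun σ
  invFun := extInv σ
  left_inv i := by
    apply Fin.ext
    by_cases h : (i:ℕ) < n
    · have h1 := extFun_val_lt σ i h
      have h2 : 0 < (extFun σ i : ℕ) := by omega
      rw [extInv_val_pos σ _ h2]
      have h3 : (⟨(extFun σ i : ℕ) - 1, by have := (extFun σ i).isLt; omega⟩ : Fin n)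
          = σ ⟨i, h⟩ := by apply Fin.ext; simp [h1]
      rw [h3, Equiv.symm_apply_apply]
    · have h1 := extFun_val_last σ i h
      have h2 : ¬ 0 < (extFun σ i : ℕ) := by omega
      rw [extInv_val_zero σ _ h2]
      have := i.isLt; omega
  right_inv j := by
    apply Fin.ext
    by_cases h : 0 < (j:ℕ)
    · have h1 := extInv_val_pos σ j h
      have h2 : (extInv σ j : ℕ) < n := by rw [h1]; exact (σ.symm _).isLt
      rw [extFun_val_lt σ _ h2]
      have h3 : (⟨(extInv σ j : ℕ), h2⟩ : Fin n)
          = σ.symm ⟨(j:ℕ) - 1, by have := j.isLt; omega⟩ := by apply Fin.ext; simp [h1]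
      rw [h3, Equiv.apply_symm_apply]
      show ((j:ℕ) - 1) + 1 = (j:ℕ)
      omega
    · have h1 := extInv_val_zero σ j h
      have h2 : ¬ (extInv σ j : ℕ) < n := by omega
      rw [extFun_val_last σ _ h2]
      have := j.isLt; omega

end Stmt8
namespace Stmt8
variable {n : ℕ} (σ : Equiv.Perm (Fin n))

lemma extPerm_apply (i : Fin (n+1)) : extPerm σ i = extFun σ i := rfl
lemma extPerm_symm_apply (j : Fin (n+1)) : (extPerm σ).symm j = extInv σ j := rfl

lemma extPerm_last : extPerm σ (Fin.last n) = 0 := by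
  apply Fin.ext
  rw [extPerm_apply, extFun_val_last σ _ (by simp)]
  simp

lemma extPerm_injective : Function.Injective (extPerm (n := n)) := by
  intro σ τ h
  have key : ∀ i : Fin (n+1), extFun σ i = extFun τ i := fun i => by
    rw [← extPerm_apply, ← extPerm_apply, h]
  ext i
  have hlt : ((⟨(i:ℕ), by omega⟩ : Fin (n+1)) : ℕ) < n := i.isLt
  have h1 := extFun_val_lt σ ⟨(i:ℕ), by omega⟩ hlt
  have h2 := extFun_val_lt τ ⟨(i:ℕ), by omega⟩ hlt
  rw [key] at h1
  have h4 : (⟨((⟨(i:ℕ), by omega⟩ : Fin (n+1)) : ℕ), hlt⟩ : Fin n) = i := by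
    apply Fin.ext; rfl
  rw [h4] at h1 h2
  omega

/-- If `w_σ` contains a pattern, so does `w_{extPerm σ}`. -/
lemma contains_ext_of {k : ℕ} (p : Fin k → ℕ)
    (h : PatContains (fun i => ((σ i : Fin n) : ℕ)) p) :
    PatContains (fun i => ((extPerm σ i : Fin (n+1)) : ℕ)) p := by
  obtain ⟨f, hmono, hlt, heq⟩ := h
  refine ⟨fun i => ⟨(f i : ℕ), by have := (f i).isLt; omega⟩, ?_, ?_, ?_⟩
  · exact fun a b hab => Fin.mk_lt_mk.mpr (Fin.lt_def.mp (hmono hab))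
  · intro a b
    beta_reduce
    rw [extPerm_apply, extPerm_apply,
      extFun_val_lt σ _ (show ((⟨(f a : ℕ), by have := (f a).isLt; omega⟩ : Fin (n+1)):ℕ) < n from (f a).isLt),
      extFun_val_lt σ _ (show ((⟨(f b : ℕ), by have := (f b).isLt; omega⟩ : Fin (n+1)):ℕ) < n from (f b).isLt)]
    have h2 : (σ (f a) : ℕ) < (σ (f b) : ℕ) ↔ p a < p b := hlt a b
    simp only [Fin.eta]
    omega
  · intro a b
    beta_reduce
    rw [extPerm_apply, extPerm_apply,
      extFun_val_lt σ _ (show ((⟨(f a : ℕ), by have := (f a).isLt; omega⟩ : Fin (n+1)):ℕ) < n from (f a).isLt),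
      extFun_val_lt σ _ (show ((⟨(f b : ℕ), by have := (f b).isLt; omega⟩ : Fin (n+1)):ℕ) < n from (f b).isLt)]
    have h2 : (σ (f a) : ℕ) = (σ (f b) : ℕ) ↔ p a = p b := heq a b
    simp only [Fin.eta]
    rw [← h2]
    omega

/-- Conversely, if the last pattern entry is not a strict minimum, a pattern
occurrence in `w_{extPerm σ}` yields one in `w_σ`. -/
lemma contains_of_ext {m : ℕ} (p : Fin (m+1) → ℕ)
    (hp : ∃ i : Fin (m+1), i ≠ Fin.last m ∧ p i ≤ p (Fin.last m))
    (h : PatContains (fun i => ((extPerm σ i : Fin (n+1)) : ℕ)) p) :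
    PatContains (fun i => ((σ i : Fin n) : ℕ)) p := by
  obtain ⟨f, hmono, hlt, heq⟩ := h
  have hflt : ∀ i : Fin (m+1), (f i : ℕ) < n := by
    intro i
    by_contra hcon
    have hfi : (f i : ℕ) = n := by have := (f i).isLt; omega
    have hil : i = Fin.last m := by
      by_contra hil
      have h5 : f i < f (Fin.last m) := hmono (lt_of_le_of_ne (Fin.le_last i) hil)
      have h6 := (f (Fin.last m)).isLt
      rw [Fin.lt_def] at h5; omega
    subst hil
    obtain ⟨j, hj, hjle⟩ := hp
    have hjlt : f j < f (Fin.last m) := hmono (lt_of_le_of_ne (Fin.le_last j) hj)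
    have hfj : (f j : ℕ) < n := by rw [Fin.lt_def] at hjlt; omega
    have h0 : ((extPerm σ (f (Fin.last m)) : Fin (n+1)) : ℕ) = 0 := by
      rw [extPerm_apply]; exact extFun_val_last σ _ (by omega)
    have hpos : ((extPerm σ (f j) : Fin (n+1)) : ℕ) = (σ ⟨(f j : ℕ), hfj⟩ : ℕ) + 1 := by
      rw [extPerm_apply]; exact extFun_val_lt σ _ hfj
    have hgoal : ((extPerm σ (f (Fin.last m)) : Fin (n+1)) : ℕ)
        < ((extPerm σ (f j) : Fin (n+1)) : ℕ) := by omega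
    have := (hlt (Fin.last m) j).mp hgoal
    omega
  refine ⟨fun i => ⟨(f i : ℕ), hflt i⟩, ?_, ?_, ?_⟩
  · exact fun a b hab => Fin.mk_lt_mk.mpr (Fin.lt_def.mp (hmono hab))
  · intro a b
    have ha : ((extPerm σ (f a) : Fin (n+1)) : ℕ) = (σ ⟨(f a : ℕ), hflt a⟩ : ℕ) + 1 := by
      rw [extPerm_apply]; exact extFun_val_lt σ _ (hflt a)
    have hb : ((extPerm σ (f b) : Fin (n+1)) : ℕ) = (σ ⟨(f b : ℕ), hflt b⟩ : ℕ) + 1 := by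
      rw [extPerm_apply]; exact extFun_val_lt σ _ (hflt b)
    have h2 : ((extPerm σ (f a) : Fin (n+1)) : ℕ) < ((extPerm σ (f b) : Fin (n+1)) : ℕ)
        ↔ p a < p b := hlt a b
    beta_reduce
    omega
  · intro a b
    have ha : ((extPerm σ (f a) : Fin (n+1)) : ℕ) = (σ ⟨(f a : ℕ), hflt a⟩ : ℕ) + 1 := by
      rw [extPerm_apply]; exact extFun_val_lt σ _ (hflt a)
    have hb : ((extPerm σ (f b) : Fin (n+1)) : ℕ) = (σ ⟨(f b : ℕ), hflt b⟩ : ℕ) + 1 := by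
      rw [extPerm_apply]; exact extFun_val_lt σ _ (hflt b)
    have h2 : ((extPerm σ (f a) : Fin (n+1)) : ℕ) = ((extPerm σ (f b) : Fin (n+1)) : ℕ)
        ↔ p a = p b := heq a b
    beta_reduce
    rw [← h2, ha, hb]
    omega

lemma avoidsI_ext_iff : AvoidsI (extPerm σ) ↔ AvoidsI σ := by
  constructor
  · rintro ⟨h1, h2, h3⟩
    exact ⟨fun c => h1 (contains_ext_of σ _ c),
           fun c => h2 (contains_ext_of σ _ c),
           fun c => h3 (contains_ext_of σ _ c)⟩
  · rintro ⟨h1, h2, h3⟩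
    refine ⟨fun c => h1 ?_, fun c => h2 ?_, fun c => h3 ?_⟩
    · exact contains_of_ext σ _ ⟨1, by decide, by decide⟩ c
    · exact contains_of_ext σ _ ⟨2, by decide, by decide⟩ c
    · exact contains_of_ext σ _ ⟨2, by decide, by decide⟩ c

end Stmt8
namespace Stmt8
variable {n : ℕ}

abbrev DesT {m : ℕ} (w : Fin m → ℕ) : Type :=
  {q : Fin m × Fin m // (q.2 : ℕ) = (q.1 : ℕ) + 1 ∧ w q.2 < w q.1}

lemma desNum_eq {m : ℕ} (w : Fin m → ℕ) : desNum w = Nat.card (DesT w) := rfl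

def Wext (σ : Equiv.Perm (Fin n)) : Fin (n+1) → ℕ :=
  fun i => (((extPerm σ).symm i : Fin (n+1)) : ℕ)

def wrd (σ : Equiv.Perm (Fin n)) : Fin n → ℕ := fun i => ((σ.symm i : Fin n) : ℕ)

lemma Wext_pos (σ : Equiv.Perm (Fin n)) (j : Fin (n+1)) (h : 0 < (j:ℕ)) :
    Wext σ j = (σ.symm ⟨(j:ℕ) - 1, by have := j.isLt; omega⟩ : ℕ) := by
  show (((extPerm σ).symm j : Fin (n+1)) : ℕ) = _
  rw [extPerm_symm_apply]; exact extInv_val_pos σ j h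

lemma Wext_zero (σ : Equiv.Perm (Fin n)) (j : Fin (n+1)) (h : (j:ℕ) = 0) :
    Wext σ j = n := by
  show (((extPerm σ).symm j : Fin (n+1)) : ℕ) = _
  rw [extPerm_symm_apply]; exact extInv_val_zero σ j (by omega)

lemma Wext_succ (σ : Equiv.Perm (Fin n)) (a : Fin n) (h : (a:ℕ) + 1 < n + 1) :
    Wext σ ⟨(a:ℕ)+1, h⟩ = wrd σ a := by
  have h2 : (⟨((⟨(a:ℕ)+1, h⟩ : Fin (n+1)) : ℕ) - 1,
      by have := a.isLt; omega⟩ : Fin n) = a := Fin.ext (by simp)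
  rw [Wext_pos σ ⟨(a:ℕ)+1, h⟩ (Nat.succ_pos _), h2]
  rfl

def Fmap (σ : Equiv.Perm (Fin n)) (hn : 1 ≤ n) :
    DesT (wrd σ) ⊕ Unit → DesT (Wext σ) := fun x =>
  match x with
  | Sum.inl s =>
      ⟨(⟨(s.val.1 : ℕ)+1, by have := s.val.1.isLt; omega⟩,
        ⟨(s.val.2 : ℕ)+1, by have := s.val.2.isLt; omega⟩),
        by simp [s.prop.1],
        by rw [Wext_succ σ s.val.1, Wext_succ σ s.val.2]; exact s.prop.2⟩
  | Sum.inr _ =>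
      ⟨(⟨0, by omega⟩, ⟨1, by omega⟩), by simp,
        by
          rw [Wext_zero σ ⟨0, by omega⟩ rfl, Wext_pos σ ⟨1, by omega⟩ (by simp)]
          exact (σ.symm _).isLt⟩

lemma Fmap_inj (σ : Equiv.Perm (Fin n)) (hn : 1 ≤ n) :
    Function.Injective (Fmap σ hn) := by
  rintro (s | ⟨⟩) (t | ⟨⟩) h
  · simp only [Fmap, Subtype.mk.injEq, Prod.mk.injEq, Fin.mk.injEq] at h
    congr 1
    apply Subtype.ext
    apply Prod.ext
    · exact Fin.ext (by omega)
    · exact Fin.ext (by omega)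
  · exfalso
    simp only [Fmap, Subtype.mk.injEq, Prod.mk.injEq, Fin.mk.injEq] at h
    omega
  · exfalso
    simp only [Fmap, Subtype.mk.injEq, Prod.mk.injEq, Fin.mk.injEq] at h
    omega
  · rfl

lemma Fmap_surj (σ : Equiv.Perm (Fin n)) (hn : 1 ≤ n) :
    Function.Surjective (Fmap σ hn) := by
  rintro ⟨⟨a, b⟩, hb, hd⟩
  dsimp only at hb hd
  by_cases ha : (a:ℕ) = 0
  · refine ⟨Sum.inr Unit.unit, ?_⟩
    simp only [Fmap]
    apply Subtype.ext
    show ((⟨0, by omega⟩ : Fin (n+1)), (⟨1, by omega⟩ : Fin (n+1))) = (a, b)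
    have e1 : (⟨0, by omega⟩ : Fin (n+1)) = a := Fin.ext (by simp; omega)
    have e2 : (⟨1, by omega⟩ : Fin (n+1)) = b := Fin.ext (by simp; omega)
    rw [e1, e2]
  · have hb1 : (b:ℕ) - 1 < n := by have := b.isLt; omega
    have ha1 : (a:ℕ) - 1 < n := by have := a.isLt; have := b.isLt; omega
    have hda : wrd σ ⟨(b:ℕ)-1, hb1⟩ < wrd σ ⟨(a:ℕ)-1, ha1⟩ := by
      have h1 : Wext σ b = wrd σ ⟨(b:ℕ)-1, hb1⟩ := by
        rw [Wext_pos σ b (by omega)]; rfl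
      have h2 : Wext σ a = wrd σ ⟨(a:ℕ)-1, ha1⟩ := by
        rw [Wext_pos σ a (by omega)]; rfl
      rw [h1, h2] at hd
      exact hd
    refine ⟨Sum.inl ⟨(⟨(a:ℕ)-1, ha1⟩, ⟨(b:ℕ)-1, hb1⟩), by simp; omega, hda⟩, ?_⟩
    simp only [Fmap]
    apply Subtype.ext
    show ((⟨(a:ℕ)-1+1, by omega⟩ : Fin (n+1)), (⟨(b:ℕ)-1+1, by omega⟩ : Fin (n+1))) = (a, b)
    have e1 : (⟨(a:ℕ)-1+1, by omega⟩ : Fin (n+1)) = a := Fin.ext (by simp; omega)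
    have e2 : (⟨(b:ℕ)-1+1, by omega⟩ : Fin (n+1)) = b := Fin.ext (by simp; omega)
    rw [e1, e2]

instance {m : ℕ} (w : Fin m → ℕ) : Finite (DesT w) := by
  unfold DesT; infer_instance

lemma ides_ext (σ : Equiv.Perm (Fin n)) (hn : 1 ≤ n) :
    ides (extPerm σ) = ides σ + 1 := by
  have e : DesT (wrd σ) ⊕ Unit ≃ DesT (Wext σ) :=
    Equiv.ofBijective (Fmap σ hn) ⟨Fmap_inj σ hn, Fmap_surj σ hn⟩
  show desNum (Wext σ) = desNum (wrd σ) + 1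
  rw [desNum_eq, desNum_eq, ← Nat.card_congr e, Nat.card_sum]
  simp

end Stmt8
namespace Stmt8
variable {n : ℕ}

lemma pi_pos (π : Equiv.Perm (Fin (n+1))) (hπ : π (Fin.last n) = 0)
    (i : Fin (n+1)) (h : (i:ℕ) < n) : 0 < (π i : ℕ) := by
  rcases Nat.eq_zero_or_pos (π i : ℕ) with h0 | hp
  · exfalso
    have h1 : π i = 0 := Fin.ext (by simp [h0])
    have h2 : i = Fin.last n := π.injective (h1.trans hπ.symm)
    rw [h2] at h
    simp at h
  · exact hp

lemma symm_lt (π : Equiv.Perm (Fin (n+1))) (hπ : π (Fin.last n) = 0)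
    (j : Fin n) : ((π.symm ⟨(j:ℕ)+1, by have := j.isLt; omega⟩ : Fin (n+1)) : ℕ) < n := by
  by_contra h
  have h1 := (π.symm (⟨(j:ℕ)+1, by have := j.isLt; omega⟩ : Fin (n+1))).isLt
  have h2 : π.symm (⟨(j:ℕ)+1, by have := j.isLt; omega⟩ : Fin (n+1)) = Fin.last n :=
    Fin.ext (by simp only [Fin.val_last]; omega)
  have h3 := congrArg π h2
  rw [Equiv.apply_symm_apply, hπ] at h3
  have h4 := congrArg Fin.val h3
  simp at h4

def resPerm (π : Equiv.Perm (Fin (n+1))) (hπ : π (Fin.last n) = 0) :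
    Equiv.Perm (Fin n) where
  toFun i := ⟨(π ⟨(i:ℕ), by have := i.isLt; omega⟩ : ℕ) - 1,
    by have := (π ⟨(i:ℕ), by have := i.isLt; omega⟩).isLt; have := i.isLt; omega⟩
  invFun j := ⟨(π.symm ⟨(j:ℕ)+1, by have := j.isLt; omega⟩ : ℕ), symm_lt π hπ j⟩
  left_inv i := by
    apply Fin.ext
    have hpos := pi_pos π hπ ⟨(i:ℕ), by have := i.isLt; omega⟩ i.isLt
    have h1 : (⟨((π ⟨(i:ℕ), by have := i.isLt; omega⟩ : ℕ) - 1) + 1,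
        by have := (π ⟨(i:ℕ), by have := i.isLt; omega⟩).isLt; omega⟩ : Fin (n+1))
        = π ⟨(i:ℕ), by have := i.isLt; omega⟩ := Fin.ext (by simp only []; omega)
    show ((π.symm ⟨((π ⟨(i:ℕ), _⟩ : ℕ) - 1) + 1, _⟩ : Fin (n+1)) : ℕ) = (i:ℕ)
    rw [h1, Equiv.symm_apply_apply]
  right_inv j := by
    apply Fin.ext
    have h1 : (⟨((π.symm ⟨(j:ℕ)+1, by have := j.isLt; omega⟩ : Fin (n+1)) : ℕ),
        by have := (π.symm ⟨(j:ℕ)+1, by have := j.isLt; omega⟩).isLt; omega⟩ : Fin (n+1))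
        = π.symm ⟨(j:ℕ)+1, by have := j.isLt; omega⟩ := Fin.ext rfl
    show ((π ⟨((π.symm ⟨(j:ℕ)+1, _⟩ : Fin (n+1)) : ℕ), _⟩ : Fin (n+1)) : ℕ) - 1 = (j:ℕ)
    rw [h1, Equiv.apply_symm_apply]
    simp

lemma ext_res (π : Equiv.Perm (Fin (n+1))) (hπ : π (Fin.last n) = 0) :
    extPerm (resPerm π hπ) = π := by
  apply Equiv.ext
  intro i
  apply Fin.ext
  rw [extPerm_apply]
  by_cases h : (i:ℕ) < n
  · rw [extFun_val_lt _ _ h]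
    have hpos := pi_pos π hπ i h
    have h2 : ((resPerm π hπ ⟨(i:ℕ), h⟩ : Fin n) : ℕ)
        = (π ⟨(i:ℕ), by omega⟩ : ℕ) - 1 := rfl
    rw [h2]
    have h3 : (⟨(i:ℕ), by omega⟩ : Fin (n+1)) = i := Fin.ext rfl
    rw [h3]
    omega
  · rw [extFun_val_last _ _ h]
    have h2 : i = Fin.last n := Fin.ext (by simp only [Fin.val_last]; have := i.isLt; omega)
    rw [h2, hπ]
    rfl

end Stmt8

/-- permutations of `{1,…,n+1}` in the avoidance class of
{3124, 42153, 24153} ending with the entry `1` (0-based: `π (Fin.last n) = 0`)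
with `ides = k` (`k ≥ 1`) are equinumerous with class permutations of `{1,…,n}`
with `ides = k − 1`. -/
theorem stmt_8 (n k : ℕ) (hn : 1 ≤ n) (hk : 1 ≤ k) :
    Nat.card {π : Equiv.Perm (Fin (n + 1)) //
      AvoidsI π ∧ π (Fin.last n) = 0 ∧ ides π = k} =
    Nat.card {σ : Equiv.Perm (Fin n) // AvoidsI σ ∧ ides σ = k - 1} := by
  let F : {σ : Equiv.Perm (Fin n) // AvoidsI σ ∧ ides σ = k - 1} →
      {π : Equiv.Perm (Fin (n + 1)) //
        AvoidsI π ∧ π (Fin.last n) = 0 ∧ ides π = k} :=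
    fun y => ⟨Stmt8.extPerm y.1, (Stmt8.avoidsI_ext_iff _).mpr y.2.1,
      Stmt8.extPerm_last _, by rw [Stmt8.ides_ext _ hn, y.2.2]; omega⟩
  have hFinj : Function.Injective F := by
    intro x y h
    have h2 : Stmt8.extPerm x.1 = Stmt8.extPerm y.1 := congrArg Subtype.val h
    exact Subtype.ext (Stmt8.extPerm_injective h2)
  have hFsurj : Function.Surjective F := by
    rintro ⟨π, hA, hL, hI⟩
    have hres := Stmt8.ext_res π hL
    have hA' : AvoidsI (Stmt8.resPerm π hL) := by
      rw [← hres] at hA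
      exact (Stmt8.avoidsI_ext_iff _).mp hA
    have hI' : ides (Stmt8.resPerm π hL) = k - 1 := by
      have h2 := Stmt8.ides_ext (Stmt8.resPerm π hL) hn
      rw [hres] at h2
      omega
    exact ⟨⟨Stmt8.resPerm π hL, hA', hI'⟩, Subtype.ext hres⟩
  exact (Nat.card_congr (Equiv.ofBijective F ⟨hFinj, hFsurj⟩)).symm
end

section
/- Fix I = {3124, 42153, 24153}. For each n ≥ 2 and each k ≥ 1, the number of permutations π in 𝔖^L_{n,3}(I) with ides(π) = k equals Σ_{m=2}^{n−1} Σ_{i=0}^{k−1} (number of σ ∈ 𝔖_m(I) with 1 < σ_m < m and ides(σ) = i) · (number of μ ∈ 𝔖_{n−m}(I) with ides(μ) = k − 1 − i), where σ_m denotes the last entry of σ. -/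
/-!
If `alt(π) = 3` and `w_π` starts with `L`, then `w_π = L^a R^b L^c` with `a, b, c ≥ 1`. So the
entry `1` of `π` sits at position `m = n - b`, the entries to its right are exactly the values
`a + 2, …, a + b + 1`, and those to its left are `2, …, a + 1` and `a + b + 2, …, n`.
Standardising the right part gives `μ ∈ 𝔖_{n-m}`; standardising the left part and appending
`a + 1` gives `σ ∈ 𝔖_m` with `1 < σ_m < m`, and every such pair glues back to a unique `π`.
An occurrence of 3124, 42153 or 24153 in `π` lies in one of the two parts, except that its
last entry may lie right of `1` while the others lie left of it; it can then be read off in `σ`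
with `σ_m` in place of that last entry. Hence `π` avoids `I` iff `σ` and `μ` do. Finally
`ides π = 1 + ides σ + ides μ`, the extra inverse descent being `2` standing left of `1`.
-/

namespace PatternClass

open Finset Equiv

/-- Entries of `σ` as a function on `ℕ` (the identity off `[0, m)`), so that `omega` can reason
about them. -/
def permNat {m : ℕ} (σ : Perm (Fin m)) (j : ℕ) : ℕ :=
  if h : j < m then σ ⟨j, h⟩ else j

section permNat

variable {m : ℕ} (σ : Perm (Fin m))

theorem permNat_coe (j : Fin m) : permNat σ j = σ j := by
  simp [permNat]

theorem permNat_lt {j : ℕ} (h : j < m) : permNat σ j < m := by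
  simp [permNat, h]

theorem permNat_symm_permNat {j : ℕ} (h : j < m) : permNat σ.symm (permNat σ j) = j := by
  simp [permNat, h]

theorem permNat_permNat_symm {j : ℕ} (h : j < m) : permNat σ (permNat σ.symm j) = j :=
  permNat_symm_permNat σ.symm h

theorem permNat_inj {i j : ℕ} (hi : i < m) (hj : j < m) (h : permNat σ i = permNat σ j) :
    i = j := by
  rw [← permNat_symm_permNat σ hi, h, permNat_symm_permNat σ hj]

theorem permNat_symm_eq {g : ℕ → ℕ} (hg : ∀ v < m, g v < m)
    (hσg : ∀ v < m, permNat σ (g v) = v) {v : ℕ} (hv : v < m) : permNat σ.symm v = g v := by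
  calc permNat σ.symm v = permNat σ.symm (permNat σ (g v)) := by rw [hσg v hv]
    _ = g v := permNat_symm_permNat σ (hg v hv)

theorem permNat_last_lt (hm : 0 < m) : permNat σ (m - 1) < m := permNat_lt σ (by omega)

theorem permNat_ne_last {j : ℕ} (hj : j < m - 1) : permNat σ j ≠ permNat σ (m - 1) :=
  fun h => by have := permNat_inj σ (by omega) (by omega) h; omega

theorem permNat_symm_ne_pred {v : ℕ} (hv : v < m) (hvt : v ≠ permNat σ (m - 1)) :
    permNat σ.symm v ≠ m - 1 :=
  fun h => hvt (by rw [← h, permNat_permNat_symm σ hv])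

end permNat

noncomputable def permOfInjOn (m : ℕ) (g : ℕ → ℕ) (hg : ∀ j < m, g j < m)
    (hinj : ∀ i < m, ∀ j < m, g i = g j → i = j) : Perm (Fin m) :=
  Equiv.ofBijective (fun j => ⟨g j, hg j j.2⟩) <| Finite.injective_iff_bijective.mp
    fun i j h => Fin.ext (hinj i i.2 j j.2 (Fin.val_eq_of_eq h))

theorem permNat_permOfInjOn {m : ℕ} {g : ℕ → ℕ} (hg : ∀ j < m, g j < m)
    (hinj : ∀ i < m, ∀ j < m, g i = g j → i = j) {j : ℕ} (hj : j < m) :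
    permNat (permOfInjOn m g hg hinj) j = g j := by
  simp [permNat, hj, permOfInjOn]

def descentInd (g : ℕ → ℕ) (i : ℕ) : ℕ := if g (i + 1) < g i then 1 else 0

theorem desNum_eq_sum {n : ℕ} (w : Fin n → ℕ) (g : ℕ → ℕ) (hg : ∀ j : Fin n, g j = w j) :
    desNum w = ∑ i ∈ range (n - 1), descentInd g i := by
  classical
  simp only [descentInd, sum_boole, Nat.cast_id]
  rw [desNum, Nat.card_eq_fintype_card, Fintype.card_subtype]
  refine card_bij' (fun q _ => (q.1 : ℕ))
    (fun i hi => (⟨i, by grind⟩, ⟨i + 1, by grind⟩)) ?_ ?_ ?_ ?_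
  · intro q hq
    simp only [mem_filter, mem_univ, true_and, mem_range] at hq ⊢
    rw [hg, ← hq.1, hg]
    exact ⟨by omega, hq.2⟩
  · intro i hi
    simp only [mem_filter, mem_range, mem_univ, true_and] at hi ⊢
    simpa [← hg] using hi.2
  · intro q hq
    simp only [mem_filter, mem_univ, true_and] at hq
    ext <;> simp [hq.1]
  · intro i hi
    rfl

theorem ides_eq_sum {n : ℕ} (π : Perm (Fin n)) :
    ides π = ∑ i ∈ range (n - 1), descentInd (permNat π.symm) i :=
  desNum_eq_sum _ _ (permNat_coe π.symm)

/-- The word `σ' 0 μ'`: `μ'` is `μ` shifted into the value band just above the last entry `t`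
of `σ`, and `σ'` is `σ` without its last entry, with the values above `t` pushed above that
band. -/
def glueFun {n m : ℕ} (σ : Perm (Fin m)) (μ : Perm (Fin (n - m))) (j : ℕ) : ℕ :=
  if j < m - 1 then
    if permNat σ j < permNat σ (m - 1) then permNat σ j + 1 else permNat σ j + (n - m)
  else if j = m - 1 then 0
  else permNat μ (j - m) + permNat σ (m - 1) + 1

def glueInv {n m : ℕ} (σ : Perm (Fin m)) (μ : Perm (Fin (n - m))) (v : ℕ) : ℕ :=
  if v = 0 then m - 1
  else if v ≤ permNat σ (m - 1) then permNat σ.symm (v - 1)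
  else if v ≤ permNat σ (m - 1) + (n - m) then m + permNat μ.symm (v - permNat σ (m - 1) - 1)
  else permNat σ.symm (v - (n - m))

section glueFun

variable {n m : ℕ} {σ : Perm (Fin m)} {μ : Perm (Fin (n - m))}

theorem glueFun_of_lt_of_lt {j : ℕ} (hj : j < m - 1) (h : permNat σ j < permNat σ (m - 1)) :
    glueFun σ μ j = permNat σ j + 1 := by
  simp [glueFun, hj, h]

theorem glueFun_of_lt_of_gt {j : ℕ} (hj : j < m - 1) (h : permNat σ (m - 1) < permNat σ j) :
    glueFun σ μ j = permNat σ j + (n - m) := by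
  simp [glueFun, hj, h.not_gt]

theorem glueFun_pred : glueFun σ μ (m - 1) = 0 := by
  simp [glueFun]

theorem glueFun_add (hm : 0 < m) (u : ℕ) :
    glueFun σ μ (m + u) = permNat μ u + permNat σ (m - 1) + 1 := by
  simp [glueFun, show ¬ m + u < m - 1 by omega, show m + u ≠ m - 1 by omega]

theorem glueInv_zero : glueInv σ μ 0 = m - 1 := by
  simp [glueInv]

theorem glueInv_succ_of_lt {v : ℕ} (h : v < permNat σ (m - 1)) :
    glueInv σ μ (v + 1) = permNat σ.symm v := by
  rw [glueInv, if_neg (by omega), if_pos (by omega), Nat.add_sub_cancel]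

theorem glueInv_add_of_lt {u : ℕ} (h : u < n - m) :
    glueInv σ μ (permNat σ (m - 1) + 1 + u) = m + permNat μ.symm u := by
  rw [glueInv, if_neg (by omega), if_neg (by omega), if_pos (by omega)]
  congr 3
  omega

theorem glueInv_add_of_gt {v : ℕ} (h : permNat σ (m - 1) < v) :
    glueInv σ μ (v + (n - m)) = permNat σ.symm v := by
  rw [glueInv, if_neg (by omega), if_neg (by omega), if_neg (by omega), Nat.add_sub_cancel]

variable (hm : 0 < m) (hmn : m ≤ n)
include hm hmn

theorem glueFun_lt {j : ℕ} (hj : j < n) : glueFun σ μ j < n := by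
  have := permNat_last_lt σ hm
  unfold glueFun
  split_ifs with h1 h2
  · omega
  · have := permNat_lt σ (j := j) (by omega); omega
  · omega
  · have := permNat_lt μ (j := j - m) (by omega); omega

theorem glueInv_lt {v : ℕ} (hv : v < n) : glueInv σ μ v < n := by
  have := permNat_last_lt σ hm
  unfold glueInv
  split_ifs with h1 h2 h3
  · omega
  · have := permNat_lt σ.symm (j := v - 1) (by omega); omega
  · have := permNat_lt μ.symm (j := v - permNat σ (m - 1) - 1) (by omega); omega
  · have := permNat_lt σ.symm (j := v - (n - m)) (by omega); omega

theorem glueInv_glueFun {j : ℕ} (hj : j < n) : glueInv σ μ (glueFun σ μ j) = j := by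
  by_cases h1 : j < m - 1
  · rcases Nat.lt_or_gt_of_ne (permNat_ne_last σ h1) with h | h
    · rw [glueFun_of_lt_of_lt h1 h, glueInv_succ_of_lt h, permNat_symm_permNat σ (by omega)]
    · rw [glueFun_of_lt_of_gt h1 h, glueInv_add_of_gt h, permNat_symm_permNat σ (by omega)]
  · by_cases h2 : j = m - 1
    · rw [h2, glueFun_pred, glueInv_zero]
    · obtain ⟨u, rfl⟩ : ∃ u, j = m + u := ⟨j - m, by omega⟩
      rw [glueFun_add hm, show permNat μ u + permNat σ (m - 1) + 1
          = permNat σ (m - 1) + 1 + permNat μ u by ring,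
        glueInv_add_of_lt (permNat_lt μ (by omega)), permNat_symm_permNat μ (by omega)]

theorem glueFun_glueInv {v : ℕ} (hv : v < n) : glueFun σ μ (glueInv σ μ v) = v := by
  have ht := permNat_last_lt σ hm
  rcases v with _ | w
  · rw [glueInv_zero, glueFun_pred]
  by_cases h1 : w < permNat σ (m - 1)
  · have := permNat_symm_ne_pred σ (v := w) (by omega) h1.ne
    have := permNat_lt σ.symm (j := w) (by omega)
    rw [glueInv_succ_of_lt h1, glueFun_of_lt_of_lt (by omega)
      (by rwa [permNat_permNat_symm σ (by omega)]), permNat_permNat_symm σ (by omega)]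
  by_cases h2 : w < permNat σ (m - 1) + (n - m)
  · obtain ⟨u, rfl⟩ : ∃ u, w = permNat σ (m - 1) + u := ⟨w - permNat σ (m - 1), by omega⟩
    rw [add_right_comm, glueInv_add_of_lt (by omega), glueFun_add hm,
      permNat_permNat_symm μ (by omega)]
    omega
  · obtain ⟨x, hx⟩ : ∃ x, w + 1 = x + (n - m) := ⟨w + 1 - (n - m), by omega⟩
    have := permNat_symm_ne_pred σ (v := x) (by omega) (by omega)
    have := permNat_lt σ.symm (j := x) (by omega)
    rw [hx, glueInv_add_of_gt (by omega), glueFun_of_lt_of_gt (by omega)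
      (by rw [permNat_permNat_symm σ (by omega)]; omega), permNat_permNat_symm σ (by omega)]

end glueFun

noncomputable def glue {n m : ℕ} (σ : Perm (Fin m)) (μ : Perm (Fin (n - m))) (hm : 0 < m)
    (hmn : m ≤ n) : Perm (Fin n) :=
  permOfInjOn n (glueFun σ μ) (fun _ => glueFun_lt hm hmn) fun i hi j hj h => by
    rw [← glueInv_glueFun hm hmn hi, h, glueInv_glueFun hm hmn hj]

section glue

variable {n m : ℕ} {σ : Perm (Fin m)} {μ : Perm (Fin (n - m))} (hm : 0 < m) (hmn : m ≤ n)

theorem glue_apply (j : Fin n) : (glue σ μ hm hmn j : ℕ) = glueFun σ μ j := rfl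

theorem permNat_glue {j : ℕ} (hj : j < n) : permNat (glue σ μ hm hmn) j = glueFun σ μ j :=
  permNat_permOfInjOn _ _ hj

theorem permNat_glue_symm {v : ℕ} (hv : v < n) :
    permNat (glue σ μ hm hmn).symm v = glueInv σ μ v := by
  refine permNat_symm_eq _ (fun v hv => glueInv_lt hm hmn hv) (fun v hv => ?_) hv
  rw [permNat_glue hm hmn (glueInv_lt hm hmn hv), glueFun_glueInv hm hmn hv]

end glue

section ides

variable {n m : ℕ} {σ : Perm (Fin m)} {μ : Perm (Fin (n - m))}

theorem descentInd_glueInv_zero (hm : 0 < m) (h0 : 0 < permNat σ (m - 1)) :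
    descentInd (glueInv σ μ) 0 = 1 := by
  have := permNat_symm_ne_pred σ (v := 0) (by omega) h0.ne
  have := permNat_lt σ.symm (j := 0) (by omega)
  have := permNat_last_lt σ hm
  rw [descentInd, zero_add, glueInv_succ_of_lt h0, glueInv_zero, if_pos (by omega)]

theorem descentInd_glueInv_succ (hm : 0 < m) (hmn : m < n) {i : ℕ}
    (hi : i < permNat σ (m - 1)) :
    descentInd (glueInv σ μ) (i + 1) = descentInd (permNat σ.symm) i := by
  have := permNat_last_lt σ hm
  have := permNat_symm_ne_pred σ (v := i) (by omega) hi.ne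
  have := permNat_lt σ.symm (j := i) (by omega)
  unfold descentInd
  rw [glueInv_succ_of_lt hi]
  rcases Nat.lt_or_ge (i + 1) (permNat σ (m - 1)) with h | h
  · rw [glueInv_succ_of_lt h]
  · have e : i + 1 = permNat σ (m - 1) := by omega
    have e' : glueInv σ μ (i + 1 + 1) = m + permNat μ.symm 0 := by
      rw [e, ← glueInv_add_of_lt (by omega)]
    rw [e', e, permNat_symm_permNat σ (by omega)]
    split_ifs <;> omega

theorem descentInd_glueInv_band {u : ℕ} (hu : u + 1 < n - m) :
    descentInd (glueInv σ μ) (permNat σ (m - 1) + 1 + u) = descentInd (permNat μ.symm) u := by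
  unfold descentInd
  rw [add_assoc _ u 1, glueInv_add_of_lt hu, glueInv_add_of_lt (by omega)]
  simp

theorem descentInd_glueInv_high (hmn : m < n) {j : ℕ} (hj : j < m - 1 - permNat σ (m - 1)) :
    descentInd (glueInv σ μ) (permNat σ (m - 1) + 1 + (n - m - 1) + j)
      = descentInd (permNat σ.symm) (permNat σ (m - 1) + j) := by
  unfold descentInd
  rw [show permNat σ (m - 1) + 1 + (n - m - 1) + j + 1 = permNat σ (m - 1) + j + 1 + (n - m) by
    omega, glueInv_add_of_gt (by omega)]
  rcases j with _ | j
  · have := permNat_symm_ne_pred σ (v := permNat σ (m - 1) + 1) (by omega) (by omega)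
    have := permNat_lt σ.symm (j := permNat σ (m - 1) + 1) (by omega)
    rw [add_zero, add_zero, glueInv_add_of_lt (by omega), permNat_symm_permNat σ (by omega)]
    split_ifs <;> omega
  · rw [show permNat σ (m - 1) + 1 + (n - m - 1) + (j + 1)
        = permNat σ (m - 1) + (j + 1) + (n - m) by omega, glueInv_add_of_gt (by omega)]

theorem ides_glue (hm : 0 < m) (hmn : m < n) (h0 : 0 < permNat σ (m - 1))
    (hlast : permNat σ (m - 1) < m - 1) :
    ides (glue σ μ hm hmn.le) = 1 + ides σ + ides μ := by
  have hglue : ides (glue σ μ hm hmn.le) = ∑ i ∈ range (n - 1), descentInd (glueInv σ μ) i := by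
    refine (ides_eq_sum _).trans (sum_congr rfl fun i hi => ?_)
    rw [mem_range] at hi
    simp only [descentInd, permNat_glue_symm hm hmn.le (show i + 1 < n by omega),
      permNat_glue_symm hm hmn.le (show i < n by omega)]
  have hσ : ides σ = ∑ i ∈ range (permNat σ (m - 1)), descentInd (permNat σ.symm) i +
      ∑ j ∈ range (m - 1 - permNat σ (m - 1)),
        descentInd (permNat σ.symm) (permNat σ (m - 1) + j) := by
    rw [ides_eq_sum, ← sum_range_add, Nat.add_sub_cancel' hlast.le]
  rw [hglue, hσ, ides_eq_sum μ,
    show n - 1 = permNat σ (m - 1) + 1 + (n - m - 1) + (m - 1 - permNat σ (m - 1)) by omega,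
    sum_range_add, sum_range_add, sum_range_succ', descentInd_glueInv_zero hm h0,
    sum_congr rfl fun i hi => descentInd_glueInv_succ hm hmn (mem_range.mp hi),
    sum_congr rfl fun u hu => descentInd_glueInv_band (by have := mem_range.mp hu; omega),
    sum_congr rfl fun j hj => descentInd_glueInv_high hmn (mem_range.mp hj)]
  ring

end ides

theorem _root_.PatContains.trans {N M k : ℕ} {w : Fin N → ℕ} {v : Fin M → ℕ} {p : Fin k → ℕ}
    (hwv : PatContains w v) (hvp : PatContains v p) : PatContains w p := by
  obtain ⟨f, hf, hlt, heq⟩ := hwv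
  obtain ⟨g, hg, hlt', heq'⟩ := hvp
  exact ⟨f ∘ g, hf.comp hg, fun a b => (hlt _ _).trans (hlt' a b),
    fun a b => (heq _ _).trans (heq' a b)⟩

section patterns

variable {n m : ℕ} {σ : Perm (Fin m)} {μ : Perm (Fin (n - m))}

theorem glueFun_cases (hm : 0 < m) {j : ℕ} (hj : j < n) :
    (j < m - 1 ∧
      (permNat σ j < permNat σ (m - 1) ∧ glueFun σ μ j = permNat σ j + 1 ∨
        permNat σ (m - 1) < permNat σ j ∧ permNat σ j < m ∧
          glueFun σ μ j = permNat σ j + (n - m))) ∨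
    (j = m - 1 ∧ glueFun σ μ j = 0) ∨
    (m ≤ j ∧ permNat μ (j - m) < n - m ∧
      glueFun σ μ j = permNat μ (j - m) + permNat σ (m - 1) + 1) := by
  by_cases h1 : j < m - 1
  · have := permNat_lt σ (j := j) (by omega)
    rcases Nat.lt_or_gt_of_ne (permNat_ne_last σ h1) with h | h
    · exact Or.inl ⟨h1, Or.inl ⟨h, glueFun_of_lt_of_lt h1 h⟩⟩
    · exact Or.inl ⟨h1, Or.inr ⟨h, this, glueFun_of_lt_of_gt h1 h⟩⟩
  · by_cases h2 : j = m - 1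
    · exact Or.inr (Or.inl ⟨h2, h2 ▸ glueFun_pred⟩)
    · obtain ⟨u, rfl⟩ : ∃ u, j = m + u := ⟨j - m, by omega⟩
      refine Or.inr (Or.inr ⟨by omega, permNat_lt μ (by omega), ?_⟩)
      rw [glueFun_add hm, Nat.add_sub_cancel_left]

theorem patContains_glue_right (hm : 0 < m) (hmn : m ≤ n) :
    PatContains (fun i => (glue σ μ hm hmn i : ℕ)) (fun i => (μ i : ℕ)) := by
  have key : ∀ u : Fin (n - m), glueFun σ μ (m + u) = μ u + permNat σ (m - 1) + 1 := fun u => by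
    rw [glueFun_add hm, permNat_coe]
  refine ⟨fun u => ⟨m + u, by omega⟩,
    fun u v h => Fin.lt_def.2 (by have := Fin.lt_def.1 h; simp only; omega),
    fun u v => ?_, fun u v => ?_⟩
  all_goals simp only [glue_apply, key]; omega

theorem patContains_glue_left (hm : 0 < m) (hmn : m < n) :
    PatContains (fun i => (glue σ μ hm hmn.le i : ℕ)) (fun i => (σ i : ℕ)) := by
  -- `σ` sits at the positions `0, …, m - 2` and `m`; the first band entry stands in for `σ_m`
  have hμ : permNat μ 0 < n - m := permNat_lt μ (by omega)
  have key : ∀ j : Fin m,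
      (σ j : ℕ) < permNat σ (m - 1) ∧ glueFun σ μ (if (j : ℕ) < m - 1 then j else m) = σ j + 1 ∨
      (σ j : ℕ) = permNat σ (m - 1) ∧
        glueFun σ μ (if (j : ℕ) < m - 1 then j else m) = permNat μ 0 + permNat σ (m - 1) + 1 ∨
      permNat σ (m - 1) < σ j ∧ (σ j : ℕ) < m ∧
        glueFun σ μ (if (j : ℕ) < m - 1 then j else m) = σ j + (n - m) := by
    intro j
    rw [← permNat_coe]
    split_ifs with hj
    · rcases glueFun_cases (σ := σ) (μ := μ) hm (show (j : ℕ) < n by omega) with h | h | h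
      <;> omega
    · have := glueFun_add (σ := σ) (μ := μ) hm 0
      rw [add_zero] at this
      rw [show (j : ℕ) = m - 1 by omega]
      omega
  refine ⟨fun j => ⟨if (j : ℕ) < m - 1 then j else m, by split_ifs <;> omega⟩,
    fun i j h => Fin.lt_def.2 ?_, fun i j => ?_, fun i j => ?_⟩
  · have := Fin.lt_def.1 h
    simp only
    split_ifs <;> omega
  all_goals simp only [glue_apply]; have := key i; have := key j; omega

/-- Positions of an occurrence in the glued word that can be read off in a single factor:
all but possibly the last one left of the entry `0` at `m - 1`, or all right of it. -/
def FitsGlue (m : ℕ) {k n : ℕ} (f : Fin k → Fin n) : Prop :=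
  ((∀ a b, a < b → (f a : ℕ) < m - 1) ∧ ∀ a, (f a : ℕ) ≠ m - 1) ∨ ∀ a, m ≤ (f a : ℕ)

theorem FitsGlue.of_last {k : ℕ} {f : Fin (k + 2) → Fin n} (hf : StrictMono f)
    (h : (f (Fin.last k).castSucc : ℕ) < m - 1 ∧ (f (Fin.last (k + 1)) : ℕ) ≠ m - 1 ∨
      m ≤ (f 0 : ℕ)) : FitsGlue m f := by
  rcases h with ⟨hpen, hlast⟩ | h0
  · have hle : ∀ a : Fin (k + 2), a ≠ Fin.last (k + 1) → (f a : ℕ) < m - 1 := fun a ha =>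
      lt_of_le_of_lt (hf.monotone (by
        rw [Fin.le_castSucc_iff, Fin.succ_last]; exact Fin.lt_last_iff_ne_last.2 ha)) hpen
    refine Or.inl ⟨fun a b hab => hle a (Fin.ne_last_of_lt hab), fun a => ?_⟩
    by_cases ha : a = Fin.last (k + 1)
    · exact ha ▸ hlast
    · exact (hle a ha).ne
  · exact Or.inr fun a => h0.trans (hf.monotone (Fin.zero_le a))

theorem patContains_left_of_glue (hm : 0 < m) {k : ℕ} {p : Fin k → ℕ} {f : Fin k → Fin n}
    (hf : StrictMono f) (hlt : ∀ a b, glueFun σ μ (f a) < glueFun σ μ (f b) ↔ p a < p b)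
    (heq : ∀ a b, glueFun σ μ (f a) = glueFun σ μ (f b) ↔ p a = p b)
    (hbefore : ∀ a b, a < b → (f a : ℕ) < m - 1) (hne : ∀ a, (f a : ℕ) ≠ m - 1) :
    PatContains (fun i => (σ i : ℕ)) p := by
  let g : Fin k → Fin m := fun a =>
    ⟨if (f a : ℕ) < m - 1 then f a else m - 1, by split_ifs <;> omega⟩
  have key : ∀ a, (f a : ℕ) < m - 1 ∧ (σ (g a) : ℕ) = permNat σ (f a) ∧
        (permNat σ (f a) < permNat σ (m - 1) ∧ glueFun σ μ (f a) = permNat σ (f a) + 1 ∨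
          permNat σ (m - 1) < permNat σ (f a) ∧ glueFun σ μ (f a) = permNat σ (f a) + (n - m)) ∨
      m ≤ (f a : ℕ) ∧ (σ (g a) : ℕ) = permNat σ (m - 1) ∧
        permNat σ (m - 1) < glueFun σ μ (f a) ∧
        glueFun σ μ (f a) ≤ permNat σ (m - 1) + (n - m) := by
    intro a
    have hσ : (σ (g a) : ℕ) = permNat σ (if (f a : ℕ) < m - 1 then f a else m - 1) :=
      (permNat_coe σ (g a)).symm
    have := hne a
    rcases glueFun_cases (σ := σ) (μ := μ) hm (f a).isLt with h | h | h
    · rw [if_pos h.1] at hσ; omega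
    · omega
    · rw [if_neg (by omega)] at hσ; omega
  refine ⟨g, fun a b hab => Fin.lt_def.2 ?_, fun a b => ?_, fun a b => ?_⟩
  · have := hbefore a b hab
    have := Fin.lt_def.1 (hf hab)
    simp only [g]
    split_ifs <;> omega
  all_goals
    beta_reduce
    rcases eq_or_ne a b with rfl | hab
    · simp
    have : ¬ (m ≤ (f a : ℕ) ∧ m ≤ (f b : ℕ)) := fun h => by
      rcases hab.lt_or_gt with hab | hab
      · have := hbefore a b hab; omega
      · have := hbefore b a hab; omega
    have := hlt a b
    have := heq a b
    have := key a
    have := key b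
    omega

theorem patContains_right_of_glue (hm : 0 < m) {k : ℕ} {p : Fin k → ℕ} {f : Fin k → Fin n}
    (hf : StrictMono f) (hlt : ∀ a b, glueFun σ μ (f a) < glueFun σ μ (f b) ↔ p a < p b)
    (heq : ∀ a b, glueFun σ μ (f a) = glueFun σ μ (f b) ↔ p a = p b)
    (hright : ∀ a, m ≤ (f a : ℕ)) : PatContains (fun i => (μ i : ℕ)) p := by
  let g : Fin k → Fin (n - m) := fun a => ⟨f a - m, by have := hright a; omega⟩
  have key : ∀ a, glueFun σ μ (f a) = μ (g a) + permNat σ (m - 1) + 1 := by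
    intro a
    have := hright a
    rw [← permNat_coe]
    rcases glueFun_cases (σ := σ) (μ := μ) hm (f a).isLt with h | h | h
    · omega
    · omega
    · exact h.2.2
  refine ⟨g, fun a b hab => Fin.lt_def.2 ?_, fun a b => ?_, fun a b => ?_⟩
  · have := Fin.lt_def.1 (hf hab)
    have := hright a
    simp only [g]
    omega
  · rw [← hlt, key, key]; beta_reduce; omega
  · rw [← heq, key, key]; beta_reduce; omega

theorem patAvoids_glue (hm : 0 < m) (hmn : m ≤ n) {k : ℕ} {p : Fin k → ℕ}
    (hσ : PatAvoids (fun i => (σ i : ℕ)) p) (hμ : PatAvoids (fun i => (μ i : ℕ)) p)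
    (hfit : ∀ f : Fin k → Fin n, StrictMono f →
      (∀ a b, glueFun σ μ (f a) < glueFun σ μ (f b) ↔ p a < p b) → FitsGlue m f) :
    PatAvoids (fun i => (glue σ μ hm hmn i : ℕ)) p := by
  rintro ⟨f, hf, hlt, heq⟩
  rcases hfit f hf hlt with ⟨hbefore, hne⟩ | hright
  · exact hσ (patContains_left_of_glue hm hf hlt heq hbefore hne)
  · exact hμ (patContains_right_of_glue hm hf hlt heq hright)

theorem fitsGlue_of_occurrence_3124 (hm : 0 < m) {f : Fin 4 → Fin n} (hf : StrictMono f)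
    (hlt : ∀ a b, glueFun σ μ (f a) < glueFun σ μ (f b) ↔ ![3, 1, 2, 4] a < ![3, 1, 2, 4] b) :
    FitsGlue m f := by
  refine FitsGlue.of_last hf ?_
  show ((f 2 : ℕ) < m - 1 ∧ (f 3 : ℕ) ≠ m - 1) ∨ m ≤ (f 0 : ℕ)
  have := Fin.lt_def.1 (hf (show (0 : Fin 4) < 1 by decide))
  have := Fin.lt_def.1 (hf (show (1 : Fin 4) < 2 by decide))
  have := Fin.lt_def.1 (hf (show (2 : Fin 4) < 3 by decide))
  have := (hlt 1 2).2 (by decide)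
  have := (hlt 2 0).2 (by decide)
  have := (hlt 0 3).2 (by decide)
  have := glueFun_cases (σ := σ) (μ := μ) hm (f 0).isLt
  have := glueFun_cases (σ := σ) (μ := μ) hm (f 1).isLt
  have := glueFun_cases (σ := σ) (μ := μ) hm (f 2).isLt
  have := glueFun_cases (σ := σ) (μ := μ) hm (f 3).isLt
  omega

theorem fitsGlue_of_occurrence_42153 (hm : 0 < m) {f : Fin 5 → Fin n} (hf : StrictMono f)
    (hlt : ∀ a b, glueFun σ μ (f a) < glueFun σ μ (f b) ↔ ![4, 2, 1, 5, 3] a < ![4, 2, 1, 5, 3] b) :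
    FitsGlue m f := by
  refine FitsGlue.of_last hf ?_
  show ((f 3 : ℕ) < m - 1 ∧ (f 4 : ℕ) ≠ m - 1) ∨ m ≤ (f 0 : ℕ)
  have := Fin.lt_def.1 (hf (show (0 : Fin 5) < 1 by decide))
  have := Fin.lt_def.1 (hf (show (1 : Fin 5) < 2 by decide))
  have := Fin.lt_def.1 (hf (show (2 : Fin 5) < 3 by decide))
  have := Fin.lt_def.1 (hf (show (3 : Fin 5) < 4 by decide))
  have := (hlt 2 1).2 (by decide)
  have := (hlt 1 4).2 (by decide)
  have := (hlt 4 0).2 (by decide)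
  have := (hlt 0 3).2 (by decide)
  have := glueFun_cases (σ := σ) (μ := μ) hm (f 0).isLt
  have := glueFun_cases (σ := σ) (μ := μ) hm (f 1).isLt
  have := glueFun_cases (σ := σ) (μ := μ) hm (f 2).isLt
  have := glueFun_cases (σ := σ) (μ := μ) hm (f 3).isLt
  have := glueFun_cases (σ := σ) (μ := μ) hm (f 4).isLt
  omega

theorem fitsGlue_of_occurrence_24153 (hm : 0 < m) {f : Fin 5 → Fin n} (hf : StrictMono f)
    (hlt : ∀ a b, glueFun σ μ (f a) < glueFun σ μ (f b) ↔ ![2, 4, 1, 5, 3] a < ![2, 4, 1, 5, 3] b) :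
    FitsGlue m f := by
  refine FitsGlue.of_last hf ?_
  show ((f 3 : ℕ) < m - 1 ∧ (f 4 : ℕ) ≠ m - 1) ∨ m ≤ (f 0 : ℕ)
  have := Fin.lt_def.1 (hf (show (0 : Fin 5) < 1 by decide))
  have := Fin.lt_def.1 (hf (show (1 : Fin 5) < 2 by decide))
  have := Fin.lt_def.1 (hf (show (2 : Fin 5) < 3 by decide))
  have := Fin.lt_def.1 (hf (show (3 : Fin 5) < 4 by decide))
  have := (hlt 2 0).2 (by decide)
  have := (hlt 0 4).2 (by decide)
  have := (hlt 4 1).2 (by decide)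
  have := (hlt 1 3).2 (by decide)
  have := glueFun_cases (σ := σ) (μ := μ) hm (f 0).isLt
  have := glueFun_cases (σ := σ) (μ := μ) hm (f 1).isLt
  have := glueFun_cases (σ := σ) (μ := μ) hm (f 2).isLt
  have := glueFun_cases (σ := σ) (μ := μ) hm (f 3).isLt
  have := glueFun_cases (σ := σ) (μ := μ) hm (f 4).isLt
  omega

theorem avoidsI_glue_iff (hm : 0 < m) (hmn : m < n) :
    AvoidsI (glue σ μ hm hmn.le) ↔ AvoidsI σ ∧ AvoidsI μ := by
  have hσ := patContains_glue_left (σ := σ) (μ := μ) hm hmn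
  have hμ := patContains_glue_right (σ := σ) (μ := μ) hm hmn.le
  constructor
  · rintro ⟨h1, h2, h3⟩
    exact ⟨⟨fun h => h1 (hσ.trans h), fun h => h2 (hσ.trans h), fun h => h3 (hσ.trans h)⟩,
      fun h => h1 (hμ.trans h), fun h => h2 (hμ.trans h), fun h => h3 (hμ.trans h)⟩
  · rintro ⟨⟨hσ1, hσ2, hσ3⟩, hμ1, hμ2, hμ3⟩
    exact ⟨patAvoids_glue hm _ hσ1 hμ1 fun _ hf hlt => fitsGlue_of_occurrence_3124 hm hf hlt,
      patAvoids_glue hm _ hσ2 hμ2 fun _ hf hlt => fitsGlue_of_occurrence_42153 hm hf hlt,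
      patAvoids_glue hm _ hσ3 hμ3 fun _ hf hlt => fitsGlue_of_occurrence_24153 hm hf hlt⟩

end patterns

theorem exists_LRL_of_forall_LRL {P : ℕ → Prop} {N : ℕ} (h0 : P 0)
    (hRL : ∃ i j, i < j ∧ j < N ∧ ¬P i ∧ P j)
    (hLRL : ∀ i₀ i₁ i₂ i₃, i₀ < i₁ → i₁ < i₂ → i₂ < i₃ → i₃ < N → P i₀ → ¬P i₁ → P i₂ → P i₃) :
    ∃ a b, 1 ≤ a ∧ 1 ≤ b ∧ a + b < N ∧ ∀ j < N, (P j ↔ j < a ∨ a + b ≤ j) := by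
  classical
  obtain ⟨i, j, hij, hjN, hi, hj⟩ := hRL
  have hR : ∃ l, ¬P l := ⟨i, hi⟩
  set a := Nat.find hR
  have ha : ¬P a := Nat.find_spec hR
  have hbefore : ∀ l < a, P l := fun l hl => not_not.1 (Nat.find_min hR hl)
  have ha0 : a ≠ 0 := fun h => ha (h ▸ h0)
  have hai : a ≤ i := Nat.find_min' hR hi
  have hL : ∃ l, a < l ∧ P l := ⟨j, by omega, hj⟩
  set s := Nat.find hL
  obtain ⟨has, hs⟩ : a < s ∧ P s := Nat.find_spec hL
  have hsj : s ≤ j := Nat.find_min' hL ⟨by omega, hj⟩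
  have hmid : ∀ l, a ≤ l → l < s → ¬P l := fun l h1 h2 hl => by
    rcases h1.eq_or_lt with rfl | h1
    · exact ha hl
    · exact Nat.find_min hL h2 ⟨h1, hl⟩
  have hafter : ∀ l, s ≤ l → l < N → P l := fun l h1 h2 => by
    rcases h1.eq_or_lt with rfl | h1
    · exact hs
    · exact hLRL (a - 1) a s l (by omega) has h1 h2 (hbefore _ (by omega)) ha hs
  refine ⟨a, s - a, by omega, by omega, by omega, fun l hl => ?_⟩
  by_cases h1 : l < a
  · exact iff_of_true (hbefore l h1) (Or.inl h1)
  by_cases h2 : l < s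
  · exact iff_of_false (hmid l (by omega) h2) (by omega)
  · exact iff_of_true (hafter l (by omega) hl) (Or.inr (by omega))

def letterL {n : ℕ} (π : Perm (Fin n)) (j : ℕ) : Prop :=
  permNat π.symm (j + 1) < permNat π.symm 0

/-- `w_π = L^a R^b L^c` with `a, b, c ≥ 1`. -/
def HasWordLRL {n : ℕ} (π : Perm (Fin n)) (a b : ℕ) : Prop :=
  1 ≤ a ∧ 1 ≤ b ∧ a + b + 2 ≤ n ∧ ∀ j < n - 1, (letterL π j ↔ j < a ∨ a + b ≤ j)

section letters

variable {n : ℕ} {π : Perm (Fin n)}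

theorem permLetterL_iff (i : Fin (n - 1)) : permLetterL π i ↔ letterL π i := by
  rw [permLetterL, letterL, Fin.lt_def, ← permNat_coe, ← permNat_coe]

theorem firstL_iff (hn : 2 ≤ n) : FirstL π ↔ letterL π 0 := by
  rw [letterL, zero_add]
  constructor
  · rintro ⟨a, b, ha, hb, h⟩
    rwa [Fin.lt_def, ← permNat_coe, ← permNat_coe, ha, hb] at h
  · intro h
    refine ⟨⟨0, by omega⟩, ⟨1, by omega⟩, rfl, rfl, ?_⟩
    rwa [Fin.lt_def, ← permNat_coe, ← permNat_coe]

theorem hasAltSub_of_strictMono {k : ℕ} {g : Fin k → ℕ} (hg : StrictMono g)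
    (hlt : ∀ a, g a < n - 1)
    (halt : ∀ a b : Fin k, (b : ℕ) = a + 1 → ¬(letterL π (g a) ↔ letterL π (g b))) :
    HasAltSub π k :=
  ⟨fun a => ⟨g a, hlt a⟩, fun _ _ h => hg h, fun a b h => by
    rw [permLetterL_iff, permLetterL_iff]; exact halt a b h⟩

theorem exists_hasWordLRL (h3 : altEq π 3) (hL : FirstL π) : ∃ a b, HasWordLRL π a b := by
  obtain ⟨⟨f, hf, halt⟩, hnot⟩ := h3
  have h01 := Fin.lt_def.1 (hf (show (0 : Fin 3) < 1 by decide))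
  have h12 := Fin.lt_def.1 (hf (show (1 : Fin 3) < 2 by decide))
  have h2 := (f 2).isLt
  have halt' : ∀ a b : Fin 3, (b : ℕ) = a + 1 → ¬(letterL π (f a) ↔ letterL π (f b)) :=
    fun a b h => by rw [← permLetterL_iff, ← permLetterL_iff]; exact halt a b h
  have hRL : ∃ i j, i < j ∧ j < n - 1 ∧ ¬letterL π i ∧ letterL π j := by
    by_cases h0 : letterL π (f 0)
    · have := halt' 0 1 rfl
      have := halt' 1 2 rfl
      exact ⟨f 1, f 2, h12, h2, by tauto, by tauto⟩
    · exact ⟨f 0, f 1, h01, by omega, h0, by have := halt' 0 1 rfl; tauto⟩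
  have hLRL : ∀ i₀ i₁ i₂ i₃, i₀ < i₁ → i₁ < i₂ → i₂ < i₃ → i₃ < n - 1 → letterL π i₀ →
      ¬letterL π i₁ → letterL π i₂ → letterL π i₃ := by
    intro i₀ i₁ i₂ i₃ h₀ h₁ h₂ h₃ l₀ l₁ l₂
    by_contra l₃
    refine hnot (hasAltSub_of_strictMono (g := ![i₀, i₁, i₂, i₃]) ?_ ?_ ?_)
    · simp [Fin.strictMono_iff_lt_succ, Fin.forall_fin_succ]
      omega
    · simp [Fin.forall_fin_succ]
      omega
    · intro a b h
      fin_cases a <;> fin_cases b <;> simp at h ⊢ <;> tauto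
  obtain ⟨a, b, ha, hb, hab, hw⟩ :=
    exists_LRL_of_forall_LRL ((firstL_iff (by omega)).1 hL) hRL hLRL
  exact ⟨a, b, ha, hb, by omega, hw⟩

theorem HasWordLRL.altEq_three {a b : ℕ} (h : HasWordLRL π a b) : altEq π 3 ∧ FirstL π := by
  obtain ⟨ha, hb, hab, hw⟩ := h
  refine ⟨⟨hasAltSub_of_strictMono (g := ![a - 1, a, a + b]) ?_ ?_ ?_, ?_⟩, ?_⟩
  · simp [Fin.strictMono_iff_lt_succ, Fin.forall_fin_succ]
    omega
  · simp [Fin.forall_fin_succ]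
    omega
  · intro i j hij
    fin_cases i <;> fin_cases j <;> simp at hij ⊢ <;>
      rw [hw _ (by omega), hw _ (by omega)] <;> omega
  · rintro ⟨f, hf, halt⟩
    have h01 := Fin.lt_def.1 (hf (show (0 : Fin 4) < 1 by decide))
    have h12 := Fin.lt_def.1 (hf (show (1 : Fin 4) < 2 by decide))
    have h23 := Fin.lt_def.1 (hf (show (2 : Fin 4) < 3 by decide))
    have h3 := (f 3).isLt
    have l01 := halt 0 1 rfl
    have l12 := halt 1 2 rfl
    have l23 := halt 2 3 rfl
    rw [permLetterL_iff, permLetterL_iff, hw _ (by omega), hw _ (by omega)] at l01 l12 l23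
    omega
  · exact (firstL_iff (by omega)).2 ((hw 0 (by omega)).2 (Or.inl ha))

end letters

theorem card_filter_apply_lt {n : ℕ} (τ : Perm (Fin n)) (c : Fin n) : #{v | τ v < c} = c := by
  rw [← Fin.card_Iio c]
  exact card_equiv τ fun v => by simp

theorem card_filter_fin_eq {n : ℕ} (P : ℕ → Prop) [DecidablePred P] :
    #{v : Fin n | P v} = #{v ∈ range n | P v} := by
  rw [← card_map Fin.valEmbedding]
  congr 1
  ext x
  simp only [mem_map, mem_filter, mem_univ, true_and, Fin.valEmbedding_apply, mem_range]
  exact ⟨fun ⟨v, hv, hx⟩ => hx ▸ ⟨v.2, hv⟩, fun ⟨hx, hP⟩ => ⟨⟨x, hx⟩, hP, rfl⟩⟩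

namespace HasWordLRL

variable {n a b : ℕ} {π : Perm (Fin n)} (h : HasWordLRL π a b)
include h

theorem symm_lt_symm_zero_iff {v : ℕ} (hv0 : v ≠ 0) (hvn : v < n) :
    permNat π.symm v < permNat π.symm 0 ↔ v ≤ a ∨ a + b < v := by
  obtain ⟨u, rfl⟩ := Nat.exists_eq_succ_of_ne_zero hv0
  rw [← letterL, h.2.2.2 u (by omega)]
  omega

theorem permNat_symm_zero : permNat π.symm 0 = n - 1 - b := by
  classical
  have hab := h.2.2.1
  have hcount := card_filter_apply_lt π.symm (π.symm ⟨0, by omega⟩)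
  rw [← permNat_coe, Fin.val_mk] at hcount
  have hfilter : univ.filter (fun v => π.symm v < π.symm ⟨0, by omega⟩)
      = univ.filter (fun v : Fin n => (1 ≤ (v : ℕ) ∧ (v : ℕ) ≤ a) ∨ a + b < (v : ℕ)) := by
    ext v
    simp only [mem_filter, mem_univ, true_and, Fin.lt_def, ← permNat_coe]
    by_cases hv : (v : ℕ) = 0
    · rw [hv]; omega
    · rw [h.symm_lt_symm_zero_iff hv v.2]; omega
  have hcard : #{v ∈ range n | (1 ≤ v ∧ v ≤ a) ∨ a + b < v} = a + (n - 1 - a - b) := by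
    rw [show {v ∈ range n | (1 ≤ v ∧ v ≤ a) ∨ a + b < v} = Ico 1 (a + 1) ∪ Ico (a + b + 1) n by
        ext; simp only [mem_filter, mem_range, mem_union, mem_Ico]; omega,
      card_union_of_disjoint (disjoint_left.2 fun x h1 h2 => by rw [mem_Ico] at h1 h2; omega),
      Nat.card_Ico, Nat.card_Ico]
    omega
  rw [hfilter, card_filter_fin_eq (fun v => (1 ≤ v ∧ v ≤ a) ∨ a + b < v), hcard] at hcount
  omega

theorem apply_cases {j : ℕ} (hj : j < n) :
    (j < n - 1 - b ∧ (1 ≤ permNat π j ∧ permNat π j ≤ a ∨ a + b < permNat π j)) ∨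
    (j = n - 1 - b ∧ permNat π j = 0) ∨
    (n - 1 - b < j ∧ a < permNat π j ∧ permNat π j ≤ a + b) := by
  have hz := h.permNat_symm_zero
  have hv := permNat_lt π hj
  have hj' := permNat_symm_permNat π hj
  by_cases hv0 : permNat π j = 0
  · rw [hv0] at hj'
    omega
  · have := h.symm_lt_symm_zero_iff hv0 hv
    rw [hj'] at this
    have hne : j ≠ n - 1 - b := fun he => hv0 (by
      rw [← permNat_permNat_symm π (j := 0) (by omega), hz, ← he])
    omega

end HasWordLRL

section bijection

variable {n m : ℕ}

theorem hasWordLRL_glue {σ : Perm (Fin m)} {μ : Perm (Fin (n - m))} (hm : 0 < m) (hmn : m < n)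
    (h0 : 0 < permNat σ (m - 1)) (hlast : permNat σ (m - 1) < m - 1) :
    HasWordLRL (glue σ μ hm hmn.le) (permNat σ (m - 1)) (n - m) := by
  refine ⟨h0, by omega, by omega, fun j hj => ?_⟩
  rw [letterL, permNat_glue_symm hm hmn.le (by omega), permNat_glue_symm hm hmn.le (by omega),
    glueInv_zero]
  by_cases h1 : j < permNat σ (m - 1)
  · have := permNat_symm_ne_pred σ (v := j) (by omega) h1.ne
    have := permNat_lt σ.symm (j := j) (by omega)
    rw [glueInv_succ_of_lt h1]
    omega
  by_cases h2 : j < permNat σ (m - 1) + (n - m)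
  · obtain ⟨u, rfl⟩ : ∃ u, j = permNat σ (m - 1) + u := ⟨j - permNat σ (m - 1), by omega⟩
    rw [add_right_comm, glueInv_add_of_lt (by omega)]
    omega
  · obtain ⟨x, hx⟩ : ∃ x, j + 1 = x + (n - m) := ⟨j + 1 - (n - m), by omega⟩
    have := permNat_symm_ne_pred σ (v := x) (by omega) (by omega)
    have := permNat_lt σ.symm (j := x) (by omega)
    rw [hx, glueInv_add_of_gt (by omega)]
    omega

theorem permNat_last_le_of_glueInv_eq (hm : 0 < m) (hmn : m < n) {σ₁ σ₂ : Perm (Fin m)}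
    {μ₁ μ₂ : Perm (Fin (n - m))} (hG : ∀ v < n, glueInv σ₁ μ₁ v = glueInv σ₂ μ₂ v) :
    permNat σ₂ (m - 1) ≤ permNat σ₁ (m - 1) := by
  by_contra! hlt
  have := permNat_last_lt σ₂ hm
  have e₁ : glueInv σ₁ μ₁ (permNat σ₁ (m - 1) + 1) = m + permNat μ₁.symm 0 :=
    glueInv_add_of_lt (σ := σ₁) (u := 0) (by omega)
  have e₂ := glueInv_succ_of_lt (μ := μ₂) hlt
  have := permNat_lt σ₂.symm (j := permNat σ₁ (m - 1)) (by omega)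
  have := hG (permNat σ₁ (m - 1) + 1) (by omega)
  omega

theorem glue_injective (hm : 0 < m) (hmn : m < n) {σ₁ σ₂ : Perm (Fin m)}
    {μ₁ μ₂ : Perm (Fin (n - m))} (h : glue σ₁ μ₁ hm hmn.le = glue σ₂ μ₂ hm hmn.le) :
    σ₁ = σ₂ ∧ μ₁ = μ₂ := by
  have hF : ∀ j < n, glueFun σ₁ μ₁ j = glueFun σ₂ μ₂ j := fun j hj => by
    rw [← permNat_glue hm hmn.le hj, h, permNat_glue hm hmn.le hj]
  have hG : ∀ v < n, glueInv σ₁ μ₁ v = glueInv σ₂ μ₂ v := fun v hv => by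
    rw [← permNat_glue_symm hm hmn.le hv, h, permNat_glue_symm hm hmn.le hv]
  have ht : permNat σ₁ (m - 1) = permNat σ₂ (m - 1) :=
    le_antisymm (permNat_last_le_of_glueInv_eq hm hmn fun v hv => (hG v hv).symm)
      (permNat_last_le_of_glueInv_eq hm hmn hG)
  constructor
  · refine Equiv.ext fun x => Fin.ext ?_
    rw [← permNat_coe, ← permNat_coe]
    by_cases hx : (x : ℕ) < m - 1
    · have := hF x (by omega)
      rcases glueFun_cases (σ := σ₁) (μ := μ₁) hm (show (x : ℕ) < n by omega) with h1 | h1 | h1 <;>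
      rcases glueFun_cases (σ := σ₂) (μ := μ₂) hm (show (x : ℕ) < n by omega) with h2 | h2 | h2 <;>
      omega
    · rw [show (x : ℕ) = m - 1 by omega, ht]
  · refine Equiv.ext fun x => Fin.ext ?_
    have := hF (m + x) (by omega)
    rw [glueFun_add hm, glueFun_add hm, ht] at this
    rw [← permNat_coe, ← permNat_coe]
    omega

theorem HasWordLRL.exists_left_factor {π : Perm (Fin n)} {a b : ℕ} (h : HasWordLRL π a b)
    (hm : 0 < m) (hb : n - m = b) :
    ∃ σ : Perm (Fin m), permNat σ (m - 1) = a ∧ ∀ j < m - 1,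
      permNat σ j = if permNat π j ≤ a then permNat π j - 1 else permNat π j - b := by
  have hb1 := h.2.1
  have hab := h.2.2.1
  let g : ℕ → ℕ := fun j =>
    if j = m - 1 then a else if permNat π j ≤ a then permNat π j - 1 else permNat π j - b
  have hg : ∀ j < m, g j < m := fun j hj => by
    have := h.apply_cases (j := j) (by omega)
    have := permNat_lt π (j := j) (by omega)
    simp only [g]
    split_ifs <;> omega
  have hinj : ∀ i < m, ∀ j < m, g i = g j → i = j := fun i hi j hj hij => by
    have := h.apply_cases (j := i) (by omega)
    have := h.apply_cases (j := j) (by omega)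
    have := permNat_inj π (i := i) (j := j) (by omega) (by omega)
    simp only [g] at hij
    split_ifs at hij <;> omega
  refine ⟨permOfInjOn m g hg hinj, ?_, fun j hj => ?_⟩
  · rw [permNat_permOfInjOn hg hinj (by omega)]
    simp [g]
  · rw [permNat_permOfInjOn hg hinj (by omega)]
    simp [g, show j ≠ m - 1 by omega]

theorem HasWordLRL.exists_right_factor {π : Perm (Fin n)} {a b : ℕ} (h : HasWordLRL π a b)
    (hm : 0 < m) (hb : n - m = b) :
    ∃ μ : Perm (Fin (n - m)), ∀ u < n - m, permNat μ u = permNat π (m + u) - (a + 1) := by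
  have hb1 := h.2.1
  have hab := h.2.2.1
  have hg : ∀ u < n - m, permNat π (m + u) - (a + 1) < n - m := fun u hu => by
    have := h.apply_cases (j := m + u) (by omega)
    have := permNat_lt π (j := m + u) (by omega)
    omega
  have hinj : ∀ u < n - m, ∀ v < n - m,
      permNat π (m + u) - (a + 1) = permNat π (m + v) - (a + 1) → u = v := fun u hu v hv huv => by
    have := h.apply_cases (j := m + u) (by omega)
    have := h.apply_cases (j := m + v) (by omega)
    have := permNat_inj π (i := m + u) (j := m + v) (by omega) (by omega)
    omega
  exact ⟨permOfInjOn (n - m) _ hg hinj, fun u hu => permNat_permOfInjOn hg hinj hu⟩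

theorem HasWordLRL.exists_glue_eq {π : Perm (Fin n)} {a b : ℕ} (h : HasWordLRL π a b)
    (hm : 0 < m) (hmn : m < n) (hb : n - m = b) :
    ∃ σ μ, permNat σ (m - 1) = a ∧ glue σ μ hm hmn.le = π := by
  obtain ⟨σ, ht, hσ⟩ := h.exists_left_factor hm hb
  obtain ⟨μ, hμ⟩ := h.exists_right_factor hm hb
  refine ⟨σ, μ, ht, Equiv.ext fun j => Fin.ext ?_⟩
  rw [glue_apply, ← permNat_coe]
  have := h.apply_cases j.2
  rcases glueFun_cases (σ := σ) (μ := μ) hm j.2 with h1 | h1 | h1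
  · have := hσ j h1.1
    split_ifs at this <;> omega
  · omega
  · have := hμ (j - m) (by omega)
    rw [show m + (j - m) = j by omega] at this
    omega

end bijection

open Classical in
noncomputable def gluePairs (n k m : ℕ) : Finset (Perm (Fin m) × Perm (Fin (n - m))) :=
  {q | (0 < permNat q.1 (m - 1) ∧ permNat q.1 (m - 1) < m - 1) ∧ AvoidsI q.1 ∧ AvoidsI q.2 ∧
    1 + ides q.1 + ides q.2 = k}

section counting

variable {n k m : ℕ}

theorem exists_last_iff (hm : 0 < m) (σ : Perm (Fin m)) :
    (∃ a : Fin m, (a : ℕ) = m - 1 ∧ 0 < (σ a : ℕ) ∧ (σ a : ℕ) < m - 1) ↔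
      0 < permNat σ (m - 1) ∧ permNat σ (m - 1) < m - 1 := by
  have hlast : permNat σ (m - 1) = σ ⟨m - 1, by omega⟩ := permNat_coe σ ⟨m - 1, by omega⟩
  constructor
  · rintro ⟨a, ha, h⟩
    rwa [hlast, show (⟨m - 1, _⟩ : Fin m) = a from Fin.ext ha.symm]
  · intro h
    exact ⟨⟨m - 1, by omega⟩, rfl, hlast ▸ h⟩

theorem card_gluePairs (hm : 0 < m) :
    #(gluePairs n k m) = ∑ i ∈ range k,
      Nat.card {σ : Perm (Fin m) // AvoidsI σ ∧
          (∃ a : Fin m, (a : ℕ) = m - 1 ∧ 0 < (σ a : ℕ) ∧ (σ a : ℕ) < m - 1) ∧ ides σ = i} *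
      Nat.card {μ : Perm (Fin (n - m)) // AvoidsI μ ∧ ides μ = k - 1 - i} := by
  classical
  rw [card_eq_sum_card_fiberwise (f := fun q => ides q.1) (t := range k) fun q hq => by
    simp only [gluePairs, coe_filter, mem_univ, true_and, Set.mem_ofPred_eq] at hq
    simp only [mem_coe, mem_range]
    omega]
  refine sum_congr rfl fun i hi => ?_
  rw [mem_range] at hi
  simp only [Nat.card_eq_fintype_card, Fintype.card_subtype, ← card_product]
  congr 1
  ext q
  simp only [gluePairs, mem_filter, mem_univ, true_and, mem_product, exists_last_iff hm]
  constructor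
  · rintro ⟨⟨hlast, hσ, hμ, hk⟩, rfl⟩
    exact ⟨⟨hσ, hlast, rfl⟩, hμ, by omega⟩
  · rintro ⟨⟨hσ, hlast, rfl⟩, hμ, hk⟩
    exact ⟨⟨hlast, hσ, hμ, by omega⟩, rfl⟩

open Classical in
theorem card_fiber_eq_card_gluePairs (hm : 0 < m) (hmn : m < n) :
    #{π : Perm (Fin n) | (AvoidsI π ∧ altEq π 3 ∧ FirstL π ∧ ides π = k) ∧
      permNat π.symm 0 + 1 = m} = #(gluePairs n k m) := by
  classical
  symm
  refine card_bij (fun q _ => glue q.1 q.2 hm hmn.le) (fun q hq => ?_) (fun q₁ _ q₂ _ h => ?_)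
    fun π hπ => ?_
  · simp only [gluePairs, mem_filter, mem_univ, true_and] at hq ⊢
    obtain ⟨⟨h0, hlast⟩, hσ, hμ, hk⟩ := hq
    refine ⟨⟨(avoidsI_glue_iff hm hmn).2 ⟨hσ, hμ⟩,
      (hasWordLRL_glue hm hmn h0 hlast).altEq_three.1,
      (hasWordLRL_glue hm hmn h0 hlast).altEq_three.2, by rw [ides_glue hm hmn h0 hlast, hk]⟩, ?_⟩
    rw [permNat_glue_symm hm hmn.le (by omega), glueInv_zero]
    omega
  · obtain ⟨h₁, h₂⟩ := glue_injective hm hmn h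
    exact Prod.ext h₁ h₂
  · simp only [mem_filter, mem_univ, true_and] at hπ
    obtain ⟨⟨hA, h3, hL, hk⟩, hπm⟩ := hπ
    obtain ⟨a, b, h⟩ := exists_hasWordLRL h3 hL
    have := h.2.2.1
    rw [h.permNat_symm_zero] at hπm
    obtain ⟨σ, μ, ht, rfl⟩ := h.exists_glue_eq hm hmn (by omega)
    have h0 : 0 < permNat σ (m - 1) := ht ▸ h.1
    have hlast : permNat σ (m - 1) < m - 1 := by omega
    rw [avoidsI_glue_iff hm hmn] at hA
    rw [ides_glue hm hmn h0 hlast] at hk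
    refine ⟨(σ, μ), ?_, rfl⟩
    simp only [gluePairs, mem_filter, mem_univ, true_and]
    exact ⟨⟨h0, hlast⟩, hA.1, hA.2, hk⟩

end counting

end PatternClass

open PatternClass in
theorem stmt_11_general (n k : ℕ) :
    Nat.card {π : Equiv.Perm (Fin n) //
      AvoidsI π ∧ altEq π 3 ∧ FirstL π ∧ ides π = k} =
    ∑ m ∈ Finset.Icc 2 (n - 1), ∑ i ∈ Finset.range k,
      Nat.card {σ : Equiv.Perm (Fin m) // AvoidsI σ ∧
          (∃ a : Fin m, (a : ℕ) = m - 1 ∧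
            0 < ((σ a : Fin m) : ℕ) ∧ ((σ a : Fin m) : ℕ) < m - 1) ∧
          ides σ = i} *
      Nat.card {μ : Equiv.Perm (Fin (n - m)) //
          AvoidsI μ ∧ ides μ = k - 1 - i} := by
  classical
  rw [Nat.card_eq_fintype_card, Fintype.card_subtype,
    Finset.card_eq_sum_card_fiberwise (f := fun π => permNat π.symm 0 + 1)
      (t := Finset.Icc 2 (n - 1)) fun π hπ => ?_]
  · refine Finset.sum_congr rfl fun m hm => ?_
    rw [Finset.mem_Icc] at hm
    rw [Finset.filter_filter, card_fiber_eq_card_gluePairs (by omega) (by omega),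
      card_gluePairs (by omega)]
  · simp only [Finset.mem_coe, Finset.mem_filter, Finset.mem_univ, true_and] at hπ
    obtain ⟨a, b, h⟩ := exists_hasWordLRL hπ.2.1 hπ.2.2.1
    simp only [Finset.mem_coe, Finset.mem_Icc, h.permNat_symm_zero]
    obtain ⟨ha, hb, hab, -⟩ := h
    omega

/-- with `I = {3124, 42153, 24153}`, for `n ≥ 2`, `k ≥ 1`, the number
of `π ∈ 𝔖ᴸ_{n,3}(I)` (class permutations with `alt = 3` whose word `w_π` starts
with `L`) having `ides = k` equals
`∑_{m=2}^{n−1} ∑_{i=0}^{k−1} |{σ ∈ 𝔖_m(I) : 1 < σ_m < m, ides σ = i}| ⬝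
|{μ ∈ 𝔖_{n−m}(I) : ides μ = k−1−i}|` (0-based, `1 < σ_m < m` becomes
`0 < σ(last) < m − 1`). -/
theorem stmt_11 (n k : ℕ) (hn : 2 ≤ n) (hk : 1 ≤ k) :
    Nat.card {π : Equiv.Perm (Fin n) //
      AvoidsI π ∧ altEq π 3 ∧ FirstL π ∧ ides π = k} =
    ∑ m ∈ Finset.Icc 2 (n - 1), ∑ i ∈ Finset.range k,
      Nat.card {σ : Equiv.Perm (Fin m) // AvoidsI σ ∧
          (∃ a : Fin m, (a : ℕ) = m - 1 ∧
            0 < ((σ a : Fin m) : ℕ) ∧ ((σ a : Fin m) : ℕ) < m - 1) ∧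
          ides σ = i} *
      Nat.card {μ : Equiv.Perm (Fin (n - m)) //
          AvoidsI μ ∧ ides μ = k - 1 - i} :=
  stmt_11_general n k
end

section
/- Fix positive integers p and n. The map sending e = (e_1,…,e_{p+n}) to (e_{p+1},…,e_{p+n}) is a bijection from the set of inversion sequences e of length n + p avoiding the pattern 0021 with iar(e) = p onto the set 𝐈_{n,p}(021) of sequences (f_1,…,f_n) of nonnegative integers with f_1 ≤ p − 1 and f_i ≤ p + i − 1 for 2 ≤ i ≤ n that avoid the pattern 021. -/
/-- Deleting the first `p` entries of a sequence of length `n + p`. -/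
def restrictSeq (p n : ℕ) (e : Fin (n + p) → ℕ) : Fin n → ℕ :=
  fun j => e ⟨p + (j : ℕ), by have := j.isLt; omega⟩


/-!
An inversion sequence `e` with `iar e = p` starts with `0, 1, …, p - 1`, so it is determined by
its tail, and the inverse of deleting the first `p` entries is prepending `0, 1, …, p - 1`.
The prefix has no repeated value, so the `00` of a `0021` in the extended sequence must end in
the tail, which then contains `021`. Conversely, if the tail contains `021` at positions
`p + a < p + b < p + c`, some position `i ∈ {p, p + a}` carries a value `v = e i < p` with
`v ≤ e (p + a)` (as `e p < p`); since `e v = v`, the positions `v < i < p + b < p + c` form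
a `0021`.
-/

section Patterns

variable {m : ℕ} (w : Fin m → ℕ)

theorem patContains_021_iff :
    PatContains w ![0, 2, 1] ↔ ∃ a b c, a < b ∧ b < c ∧ w a < w c ∧ w c < w b := by
  constructor
  · rintro ⟨g, hg, hlt, -⟩
    exact ⟨g 0, g 1, g 2, hg (by decide), hg (by decide),
      (hlt 0 2).2 (by decide), (hlt 2 1).2 (by decide)⟩
  · rintro ⟨a, b, c, hab, hbc, hac, hcb⟩
    refine ⟨![a, b, c], Fin.strictMono_iff_lt_succ.2 fun i => ?_, fun i j => ?_, fun i j => ?_⟩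
    · fin_cases i <;> simpa
    all_goals fin_cases i <;> fin_cases j <;> simp <;> omega

theorem patContains_0021_iff :
    PatContains w ![0, 0, 2, 1] ↔
      ∃ a b c d, a < b ∧ b < c ∧ c < d ∧ w a = w b ∧ w b < w d ∧ w d < w c := by
  constructor
  · rintro ⟨g, hg, hlt, heq⟩
    exact ⟨g 0, g 1, g 2, g 3, hg (by decide), hg (by decide), hg (by decide),
      (heq 0 1).2 (by decide), (hlt 1 3).2 (by decide), (hlt 3 2).2 (by decide)⟩
  · rintro ⟨a, b, c, d, hab, hbc, hcd, hab', hbd, hdc⟩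
    refine ⟨![a, b, c, d], Fin.strictMono_iff_lt_succ.2 fun i => ?_, fun i j => ?_,
      fun i j => ?_⟩
    · fin_cases i <;> simpa
    all_goals fin_cases i <;> fin_cases j <;> simp <;> omega

end Patterns

section Prefix

variable {p n : ℕ}

def extendSeq (p n : ℕ) (f : Fin n → ℕ) : Fin (n + p) → ℕ :=
  fun i => if h : (i : ℕ) < p then i else f ⟨i - p, by omega⟩

theorem extendSeq_of_lt (f : Fin n → ℕ) {i : Fin (n + p)} (hi : (i : ℕ) < p) :
    extendSeq p n f i = i := dif_pos hi

theorem extendSeq_of_le (f : Fin n → ℕ) {i : Fin (n + p)} (hi : p ≤ (i : ℕ)) :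
    extendSeq p n f i = f ⟨i - p, by omega⟩ := dif_neg (Nat.not_lt.2 hi)

theorem restrictSeq_extendSeq (f : Fin n → ℕ) : restrictSeq p n (extendSeq p n f) = f := by
  funext j
  rw [restrictSeq, extendSeq_of_le f (by simp)]
  simp

theorem extendSeq_restrictSeq {e : Fin (n + p) → ℕ}
    (he : ∀ i : Fin (n + p), (i : ℕ) < p → e i = i) :
    extendSeq p n (restrictSeq p n e) = e := by
  funext i
  by_cases hi : (i : ℕ) < p
  · rw [extendSeq_of_lt _ hi, he i hi]
  · rw [extendSeq_of_le _ (by omega), restrictSeq]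
    congr 1
    ext
    simp
    omega

theorem extendSeq_le {f : Fin n → ℕ} (hf : ∀ j : Fin n, f j ≤ p + j) (i : Fin (n + p)) :
    extendSeq p n f i ≤ i := by
  rcases lt_or_ge (i : ℕ) p with hi | hi
  · exact (extendSeq_of_lt f hi).le
  · rw [extendSeq_of_le f hi]
    have := hf ⟨i - p, by omega⟩
    dsimp only at this
    omega

theorem patAvoids_021_restrictSeq {e : Fin (n + p) → ℕ}
    (hpre : ∀ i : Fin (n + p), (i : ℕ) < p → e i = i)
    (hiar : ∀ i : Fin (n + p), (i : ℕ) = p → e i < p)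
    (he : PatAvoids e ![0, 0, 2, 1]) : PatAvoids (restrictSeq p n e) ![0, 2, 1] := by
  intro h021
  obtain ⟨a, b, c, hab, hbc, hac, hcb⟩ := (patContains_021_iff _).1 h021
  simp only [restrictSeq] at hac hcb
  have ha := a.isLt
  have hb := b.isLt
  have hc := c.isLt
  rw [Fin.lt_def] at hab hbc
  obtain ⟨i, hpi, hia, hei, hei'⟩ :
      ∃ i : Fin (n + p), p ≤ (i : ℕ) ∧ (i : ℕ) ≤ p + a ∧
        e i < p ∧ e i ≤ e ⟨p + a, by omega⟩ := by
    by_cases h : e ⟨p + a, by omega⟩ < p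
    · exact ⟨_, by simp, le_rfl, h, le_rfl⟩
    · have := hiar ⟨p, by omega⟩ rfl
      exact ⟨⟨p, by omega⟩, le_rfl, by simp, this, by omega⟩
  refine he ((patContains_0021_iff e).2
    ⟨⟨e i, by omega⟩, i, ⟨p + b, by omega⟩, ⟨p + c, by omega⟩, ?_, ?_, ?_, hpre _ hei,
      hei'.trans_lt hac, hcb⟩)
  all_goals rw [Fin.lt_def]; dsimp only; omega

theorem patAvoids_0021_extendSeq {f : Fin n → ℕ} (hf : PatAvoids f ![0, 2, 1]) :
    PatAvoids (extendSeq p n f) ![0, 0, 2, 1] := by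
  intro h0021
  obtain ⟨a, b, c, d, hab, hbc, hcd, hab', hbd, hdc⟩ := (patContains_0021_iff _).1 h0021
  have hb : p ≤ (b : ℕ) := by
    by_contra! hb
    rw [extendSeq_of_lt f ((Fin.lt_def.1 hab).trans hb), extendSeq_of_lt f hb] at hab'
    exact hab.ne (Fin.ext hab')
  rw [extendSeq_of_le f hb] at hbd
  rw [extendSeq_of_le f (hb.trans hbc.le)] at hdc
  rw [extendSeq_of_le f (hb.trans (hbc.trans hcd).le)] at hbd hdc
  refine hf ((patContains_021_iff f).2 ⟨_, _, _, ?_, ?_, hbd, hdc⟩) <;>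
    simp only [Fin.mk_lt_mk] <;> omega

end Prefix

theorem stmt_12_general (p n : ℕ) (hp : 1 ≤ p) :
    Set.BijOn (restrictSeq p n)
      {e : Fin (n + p) → ℕ |
        (∀ i : Fin (n + p), e i ≤ (i : ℕ)) ∧ PatAvoids e ![0,0,2,1] ∧
        (∀ i : Fin (n + p), (i : ℕ) < p → e i = (i : ℕ)) ∧
        (∀ i : Fin (n + p), (i : ℕ) = p → e i ≤ p - 1)}
      {f : Fin n → ℕ | PatAvoids f ![0,2,1] ∧
        (∀ j : Fin n, (j : ℕ) = 0 → f j ≤ p - 1) ∧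
        (∀ j : Fin n, 1 ≤ (j : ℕ) → f j ≤ p + (j : ℕ))} := by
  refine Set.InvOn.bijOn (f' := extendSeq p n)
    ⟨fun e he => extendSeq_restrictSeq he.2.2.1, fun f _ => restrictSeq_extendSeq f⟩ ?_ ?_
  · rintro e ⟨hinv, havoid, hpre, hiar⟩
    exact ⟨patAvoids_021_restrictSeq hpre (fun i hi => (Nat.le_sub_one_iff_lt hp).1 (hiar i hi))
      havoid, fun j hj => hiar _ (by simp [hj]), fun j _ => hinv _⟩
  · rintro f ⟨havoid, hfirst, hrest⟩
    have hbound (j : Fin n) : f j ≤ p + j := by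
      rcases Nat.eq_zero_or_pos j with hj | hj
      · exact (hfirst j hj).trans (by omega)
      · exact hrest j hj
    refine ⟨extendSeq_le hbound, patAvoids_0021_extendSeq havoid, fun i => extendSeq_of_lt f,
      fun i hi => ?_⟩
    rw [extendSeq_of_le f hi.ge]
    exact hfirst _ (by simp [hi])

/-- for fixed positive `p` and `n`, deleting the first `p` entries is a
bijection from the 0021-avoiding inversion sequences of length `n + p` with
`iar = p` (0-based: `e i = i` for `i < p` and `e` at index `p` is `≤ p − 1`) onto
`𝐈_{n,p}(021)`, the 021-avoiding sequences `f` of nonnegative integers with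
`f₁ ≤ p − 1` and `f_i ≤ p + i − 1` for `2 ≤ i ≤ n` (0-based: `f j ≤ p + j` for `j ≥ 1`). -/
theorem stmt_12 (p n : ℕ) (hp : 1 ≤ p) (hn : 1 ≤ n) :
    Set.BijOn (restrictSeq p n)
      {e : Fin (n + p) → ℕ |
        (∀ i : Fin (n + p), e i ≤ (i : ℕ)) ∧ PatAvoids e ![0,0,2,1] ∧
        (∀ i : Fin (n + p), (i : ℕ) < p → e i = (i : ℕ)) ∧
        (∀ i : Fin (n + p), (i : ℕ) = p → e i ≤ p - 1)}
      {f : Fin n → ℕ | PatAvoids f ![0,2,1] ∧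
        (∀ j : Fin n, (j : ℕ) = 0 → f j ≤ p - 1) ∧
        (∀ j : Fin n, 1 ≤ (j : ℕ) → f j ≤ p + (j : ℕ))} :=
  stmt_12_general p n hp
end

section
/- Let w = (w_1,…,w_n) be a sequence of nonnegative integers avoiding the pattern 021, and suppose that the rightmost position at which w attains its maximum value is greater than or equal to the rightmost position at which w attains its minimum value. Then the last entry w_n equals the maximum value of w. -/
/-- if `w` is a 021-avoiding sequence of nonnegative integers of length
`n ≥ 1` whose rightmost maximum position `imax` is `≥` its rightmost minimum position
`imin`, then the last entry of `w` equals the maximum value. -/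
theorem stmt_13 (n : ℕ) (hn : 1 ≤ n) (w : Fin n → ℕ)
    (hav : PatAvoids w ![0,2,1]) (imax imin : Fin n)
    (hmax : ∀ j, w j ≤ w imax) (hmaxR : ∀ j, w j = w imax → j ≤ imax)
    (hmin : ∀ j, w imin ≤ w j) (hminR : ∀ j, w j = w imin → j ≤ imin)
    (hle : imin ≤ imax) :
    w ⟨n - 1, by omega⟩ = w imax := by
  set last : Fin n := ⟨n - 1, by omega⟩ with hlast
  by_contra h
  have hlt : w last < w imax := lt_of_le_of_ne (hmax _) h
  have hlast_top : ∀ j : Fin n, j ≤ last := fun j => by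
    have := j.isLt; simp [hlast, Fin.le_def]; omega
  have h1 : w imin < w last := by
    rcases lt_or_eq_of_le (hmin last) with h1 | h1
    · exact h1
    · have := hminR last h1.symm
      have h2 := hmaxR imax rfl
      have : last ≤ imax := le_trans this hle
      have : last = imax := le_antisymm this (hlast_top _)
      exact absurd (this ▸ rfl) h
  have h2 : imin < imax := by
    rcases lt_or_eq_of_le hle with h2 | h2
    · exact h2
    · exfalso
      have he : w imin = w imax := by rw [h2]
      omega
  have h3 : imax < last := lt_of_le_of_ne (hlast_top _) (by
    intro he; exact h (he ▸ rfl))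
  have hwi : w imin < w imax := h1.trans hlt
  apply hav
  refine ⟨![imin, imax, last], ?_, ?_, ?_⟩
  · intro a b hab
    fin_cases a <;> fin_cases b <;> simp_all <;> omega
  · intro a b
    fin_cases a <;> fin_cases b <;>
      simp [Fin.lt_def] <;> omega
  · intro a b
    fin_cases a <;> fin_cases b <;>
      simp [Fin.lt_def] <;> omega
end
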